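/- arXiv:1401.4724 — 8 statements merged into one kernel-verified Lean document; each statement's English description precedes it below -/
import Mathlib

section
/- Let P, Q ∈ ℂ[[z,w]] be formal power series in two variables such that the constant coefficient of Q vanishes. Let p denote the constant coefficient of P and let q denote the coefficient of z in Q. Assume that for every positive integer r one has r² − (1 + p)r − q ≠ 0 (equivalently, the matrix L = [[0,1],[q, 1+p]] has no positive integer eigenvalue). Then there exists a unique formal power series ĥ(w) ∈ ℂ[[w]] with zero constant term such that w²·ĥ''(w) = w·P(ĥ(w), w)·ĥ'(w) + Q(ĥ(w), w) holds as an identity of formal power series in w. -/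
/-!
Comparing coefficients of `w^n`, the equation reads
`n(n-1)·hₙ = (p·n + q)·hₙ + (terms in h₁, …, hₙ₋₁)`: a monomial `z^k w^j` of `P` or `Q` sees
`hₙ` only when `(k, j) = (1, 0)`, since `ĥ^k` with `k ≥ 2` and any factor `w^j` with `j ≥ 1`
only involve lower coefficients. The factor `n² − (1+p)n − q` in front of `hₙ` never vanishes,
so the coefficients are determined recursively, which gives existence and uniqueness at once.
-/

open Finset

/-- The coefficient of `z^k w^j` in a formal power series in two variables
(variable `0` is `z`, variable `1` is `w`). -/
noncomputable def mvCoeff (P : MvPowerSeries (Fin 2) ℂ) (k j : ℕ) : ℂ :=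
  MvPowerSeries.coeff (Finsupp.single (0 : Fin 2) k + Finsupp.single (1 : Fin 2) j) P

/-- Substitution of `(h(w), w)` into a two-variable formal power series
`P(z,w) = Σ p_{kj} z^k w^j`. For `h` with zero constant term, the coefficient of `w^n`
in `P(h(w), w)` is the (finite) sum `Σ_{j ≤ n} Σ_{k ≤ n} p_{kj}·coeff_{n-j}(h^k)`. -/
noncomputable def substSeries (P : MvPowerSeries (Fin 2) ℂ) (h : PowerSeries ℂ) :
    PowerSeries ℂ :=
  PowerSeries.mk fun n =>
    ∑ j ∈ range (n + 1), ∑ k ∈ range (n + 1),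
      mvCoeff P k j * PowerSeries.coeff (n - j) (h ^ k)

theorem pow_add_dvd_pow_succ_sub_pow_succ {α : Type*} [CommRing α] {a x y : α}
    (hx : a ∣ x) (hy : a ∣ y) {n : ℕ} (hxy : a ^ n ∣ x - y) (k : ℕ) :
    a ^ (n + k) ∣ x ^ (k + 1) - y ^ (k + 1) := by
  induction k with
  | zero => simpa using hxy
  | succ k ih =>
    have e : x ^ (k + 2) - y ^ (k + 2)
        = x * (x ^ (k + 1) - y ^ (k + 1)) + (x - y) * y ^ (k + 1) := by ring
    rw [e]
    refine dvd_add ?_ ?_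
    · rw [show n + (k + 1) = 1 + (n + k) by ring, pow_add, pow_one]
      exact mul_dvd_mul hx ih
    · rw [pow_add]
      exact mul_dvd_mul hxy (pow_dvd_pow_of_dvd hy _)

namespace PowerSeries

variable {R : Type*}

section CommSemiring

variable [CommSemiring R]

theorem X_pow_succ_dvd_of_coeff_eq_zero {n : ℕ} {f : R⟦X⟧} (hf : X ^ n ∣ f)
    (hn : coeff n f = 0) : X ^ (n + 1) ∣ f := by
  rw [X_pow_dvd_iff] at hf ⊢
  intro m hm
  rcases Nat.lt_succ_iff_lt_or_eq.1 hm with hm | rfl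
  exacts [hf m hm, hn]

theorem X_pow_dvd_derivative {n : ℕ} {f : R⟦X⟧} (hf : X ^ (n + 1) ∣ f) :
    X ^ n ∣ d⁄dX R f := by
  rw [X_pow_dvd_iff] at hf ⊢
  intro m hm
  rw [coeff_derivative, hf (m + 1) (by omega), zero_mul]

theorem coeff_mul_of_X_pow_dvd {n : ℕ} {f : R⟦X⟧} (hf : X ^ n ∣ f) (s : R⟦X⟧) :
    coeff n (s * f) = constantCoeff s * coeff n f := by
  obtain ⟨f, rfl⟩ := hf
  simp [mul_left_comm s, coeff_X_pow_mul']

end CommSemiring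

variable [CommRing R]

theorem coeff_X_sq_mul_derivative_derivative (f : R⟦X⟧) (n : ℕ) :
    coeff n (X ^ 2 * d⁄dX R (d⁄dX R f)) = n * (n - 1) * coeff n f := by
  rcases n with _ | _ | n
  · simp
  · simp [pow_two, mul_assoc]
  · rw [show n + 1 + 1 = n + 2 from rfl, coeff_X_pow_mul, coeff_derivative, coeff_derivative]
    push_cast
    ring

theorem coeff_X_mul_mul_derivative_sub {n : ℕ} {s t h g : R⟦X⟧} (hst : X ^ n ∣ s - t)
    (hhg : X ^ n ∣ h - g) :
    coeff n (X * s * d⁄dX R h) - coeff n (X * t * d⁄dX R g)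
      = constantCoeff s * n * coeff n (h - g) := by
  rcases n with _ | m
  · simp
  have e : X * s * d⁄dX R h - X * t * d⁄dX R g
      = X * (s * d⁄dX R (h - g) + (s - t) * d⁄dX R g) := by
    rw [map_sub]
    ring
  have hvanish : coeff m ((s - t) * d⁄dX R g) = 0 :=
    X_pow_dvd_iff.1 (dvd_mul_of_dvd_left hst _) m m.lt_succ_self
  rw [← map_sub, e, coeff_succ_X_mul, map_add, hvanish,
    coeff_mul_of_X_pow_dvd (X_pow_dvd_derivative hhg), coeff_derivative]
  push_cast
  ring

section Triangular

/-- `F` is lower triangular with diagonal `μ` on series without constant term: the `n`-th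
coefficient of `F h` depends only on the coefficients of `h` up to `n`, and on the `n`-th one
affinely with slope `μ n`. -/
def IsTriangular (F : R⟦X⟧ → R⟦X⟧) (μ : ℕ → R) : Prop :=
  ∀ ⦃h g : R⟦X⟧⦄ ⦃n : ℕ⦄, constantCoeff h = 0 → constantCoeff g = 0 → X ^ n ∣ h - g →
    coeff n (F h) - coeff n (F g) = μ n * coeff n (h - g)

variable {F : R⟦X⟧ → R⟦X⟧} {μ : ℕ → R}

theorem IsTriangular.injOn [NoZeroDivisors R] (hF : IsTriangular F μ)
    (hμ : ∀ n, 0 < n → μ n ≠ 0) : Set.InjOn F {h | constantCoeff h = 0} := by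
  intro h h0 g g0 hFhg
  have hdvd : ∀ n, X ^ n ∣ h - g := by
    intro n
    induction n with
    | zero => simp
    | succ n ih =>
      refine X_pow_succ_dvd_of_coeff_eq_zero ih ?_
      rcases n.eq_zero_or_pos with rfl | hn
      · simp_all
      · have hdiag := hF h0 g0 ih
        rw [hFhg, sub_self, eq_comm, mul_eq_zero] at hdiag
        exact hdiag.resolve_left (hμ n hn)
  rw [← sub_eq_zero]
  ext n
  simpa using X_pow_dvd_iff.1 (hdvd (n + 1)) n n.lt_succ_self

noncomputable def triangularRootCoeff {K : Type*} [Field K] (F : K⟦X⟧ → K⟦X⟧) (μ : ℕ → K) :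
    ℕ → K
  | 0 => 0
  | n + 1 =>
    -coeff (n + 1) (F (mk fun i => if _ : i < n + 1 then triangularRootCoeff F μ i else 0))
      / μ (n + 1)

theorem IsTriangular.exists_eq_zero {K : Type*} [Field K] {F : K⟦X⟧ → K⟦X⟧} {μ : ℕ → K}
    (hF : IsTriangular F μ) (hμ : ∀ n, 0 < n → μ n ≠ 0) (hF0 : constantCoeff (F 0) = 0) :
    ∃ h, constantCoeff h = 0 ∧ F h = 0 := by
  set a := triangularRootCoeff F μ
  have ha0 : a 0 = 0 := triangularRootCoeff.eq_1 F μ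
  have h0 : constantCoeff (mk a) = 0 := by
    rw [← coeff_zero_eq_constantCoeff_apply, coeff_mk, ha0]
  refine ⟨mk a, h0, ?_⟩
  ext n
  rcases n with _ | n
  · simpa [hF0, ha0] using hF h0 (map_zero _) (by simp : X ^ 0 ∣ mk a - 0)
  · set t : K⟦X⟧ := mk fun i => if _ : i < n + 1 then a i else 0
    have ht0 : constantCoeff t = 0 := by
      rw [← coeff_zero_eq_constantCoeff_apply]
      simp [t, ha0]
    have hdiag := hF h0 ht0 (X_pow_dvd_iff.2 fun i (hi : i < n + 1) => by
      simp [t, Nat.lt_succ_iff.1 hi])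
    have hcoeff : coeff (n + 1) (mk a - t) = -coeff (n + 1) (F t) / μ (n + 1) := by
      simp only [t, map_sub, coeff_mk, lt_irrefl, dite_false, sub_zero]
      exact triangularRootCoeff.eq_2 F μ n
    rw [hcoeff, mul_div_cancel₀ _ (hμ _ n.succ_pos)] at hdiag
    simpa using hdiag

end Triangular

end PowerSeries

open PowerSeries

theorem mvCoeff_zero_zero (P : MvPowerSeries (Fin 2) ℂ) :
    mvCoeff P 0 0 = MvPowerSeries.constantCoeff P := by
  simp [mvCoeff]

theorem constantCoeff_substSeries (P : MvPowerSeries (Fin 2) ℂ) (h : ℂ⟦X⟧) :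
    constantCoeff (substSeries P h) = mvCoeff P 0 0 := by
  rw [← coeff_zero_eq_constantCoeff_apply]
  simp [substSeries]

/-- Only the monomial `z` sees the `n`-th coefficient of `h`: a factor `w^j` with `j ≥ 1` shifts
to lower coefficients, and `h^k ≡ g^k mod X^(n+1)` for `k ≥ 2`. -/
theorem coeff_substSeries_sub (P : MvPowerSeries (Fin 2) ℂ) {h g : ℂ⟦X⟧}
    (h0 : constantCoeff h = 0) (g0 : constantCoeff g = 0) {n : ℕ} (hhg : X ^ n ∣ h - g) :
    coeff n (substSeries P h) - coeff n (substSeries P g) = mvCoeff P 1 0 * coeff n (h - g) := by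
  have hvanish : ∀ j ∈ range (n + 1), ∀ k, (j, k) ≠ (0, 1) →
      coeff (n - j) (h ^ k - g ^ k) = 0 := by
    intro j hj k hjk
    rw [mem_range] at hj
    rcases k with _ | _ | k
    · simp
    · have : j ≠ 0 := by rintro rfl; exact hjk rfl
      simpa using X_pow_dvd_iff.1 hhg (n - j) (by omega)
    · exact X_pow_dvd_iff.1 (pow_add_dvd_pow_succ_sub_pow_succ (X_dvd_iff.2 h0)
        (X_dvd_iff.2 g0) hhg (k + 1)) (n - j) (by omega)
  simp only [substSeries, coeff_mk, ← sum_sub_distrib, ← mul_sub, ← map_sub]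
  rw [sum_eq_single_of_mem 0 (by simp), sum_eq_single 1]
  · simp
  · intro k _ hk
    rw [hvanish 0 (by simp) k (by simpa using hk), mul_zero]
  · intro h1
    simp [show n = 0 by simpa using h1, h0, g0]
  · intro j hj hj0
    exact sum_eq_zero fun k _ => by rw [hvanish j hj k (by simp [hj0]), mul_zero]

theorem X_pow_dvd_substSeries_sub (P : MvPowerSeries (Fin 2) ℂ) {h g : ℂ⟦X⟧}
    (h0 : constantCoeff h = 0) (g0 : constantCoeff g = 0) {n : ℕ} (hhg : X ^ n ∣ h - g) :
    X ^ n ∣ substSeries P h - substSeries P g := by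
  rw [X_pow_dvd_iff]
  intro m hm
  rw [map_sub, coeff_substSeries_sub P h0 g0 ((pow_dvd_pow X hm.le).trans hhg),
    X_pow_dvd_iff.1 hhg m hm, mul_zero]

noncomputable def odeResidual (P Q : MvPowerSeries (Fin 2) ℂ) (h : ℂ⟦X⟧) : ℂ⟦X⟧ :=
  X ^ 2 * d⁄dX ℂ (d⁄dX ℂ h) - (X * substSeries P h * d⁄dX ℂ h + substSeries Q h)

theorem isTriangular_odeResidual (P Q : MvPowerSeries (Fin 2) ℂ) :
    IsTriangular (odeResidual P Q)
      fun n => (n : ℂ) ^ 2 - (1 + mvCoeff P 0 0) * n - mvCoeff Q 1 0 := by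
  intro h g n h0 g0 hhg
  have hP := coeff_X_mul_mul_derivative_sub (X_pow_dvd_substSeries_sub P h0 g0 hhg) hhg
  have hQ := coeff_substSeries_sub Q h0 g0 hhg
  rw [constantCoeff_substSeries, map_sub (coeff n) h g] at hP
  rw [map_sub (coeff n) h g] at hQ
  simp only [odeResidual, map_sub, map_add, coeff_X_sq_mul_derivative_derivative]
  linear_combination -hP - hQ

theorem constantCoeff_odeResidual_zero (P : MvPowerSeries (Fin 2) ℂ)
    {Q : MvPowerSeries (Fin 2) ℂ} (hQ0 : MvPowerSeries.constantCoeff Q = 0) :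
    constantCoeff (odeResidual P Q 0) = 0 := by
  simp [odeResidual, constantCoeff_substSeries, mvCoeff_zero_zero, hQ0]

/-- **Existence and uniqueness of a formal solution in the nonresonant case.**
Let `P, Q` be formal power series in two variables with `Q(0,0) = 0`, let `p` be the constant
coefficient of `P` and `q` the coefficient of `z` in `Q`. If `r² − (1+p)r − q ≠ 0` for every
positive integer `r`, then the equation `w²ĥ'' = wP(ĥ,w)ĥ' + Q(ĥ,w)` has a unique formal power
series solution `ĥ` with zero constant term. -/
theorem formal_solution_nonresonant
    (P Q : MvPowerSeries (Fin 2) ℂ)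
    (hQ0 : MvPowerSeries.constantCoeff Q = 0)
    (hres : ∀ r : ℕ, 0 < r →
      (r : ℂ) ^ 2 - (1 + mvCoeff P 0 0) * (r : ℂ) - mvCoeff Q 1 0 ≠ 0) :
    ∃! h : PowerSeries ℂ, PowerSeries.constantCoeff h = 0 ∧
      (PowerSeries.X : PowerSeries ℂ) ^ 2 * h.derivativeFun.derivativeFun
        = PowerSeries.X * substSeries P h * h.derivativeFun + substSeries Q h := by
  have hF := isTriangular_odeResidual P Q
  obtain ⟨h, h0, hh⟩ := hF.exists_eq_zero hres (constantCoeff_odeResidual_zero P hQ0)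
  refine ⟨h, ⟨h0, sub_eq_zero.1 hh⟩, fun g ⟨g0, hg⟩ => hF.injOn hres g0 h0 ?_⟩
  rw [hh]
  exact sub_eq_zero.2 hg
end

section
/- Let p, q, c ∈ ℂ with c ≠ 0, and let k be a positive integer satisfying k(k−1) = pk + q (i.e. k is a characteristic root of the Euler equation). Then for any 0 < r₁ < r₂ there is no holomorphic function z on the annulus A(r₁,r₂) = {w ∈ ℂ : r₁ < |w| < r₂} satisfying w²·z''(w) = p·w·z'(w) + q·z(w) + c·wᵏ for all w ∈ A(r₁,r₂). -/
/-! With `H(w) = w^{1-k} z'(w) + (k - 1 - p) w^{-k} z(w)`, a solution `z` of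
`w²z'' = pwz' + qz + cwᵏ` satisfies `H' = w^{-k-1} (w²z'' - pwz' - k(k - 1 - p) z) = c/w`, because
`k(k - 1 - p) = q` at a characteristic root. So `c/w` would have a primitive on the annulus, and
integrating it over a circle inside the annulus gives `2πic = 0`. -/

open Complex Metric

noncomputable def eulerResonantPrimitive (p : ℂ) (k : ℤ) (z : ℂ → ℂ) (w : ℂ) : ℂ :=
  w ^ (1 - k) * deriv z w + ((k : ℂ) - 1 - p) * (w ^ (-k) * z w)

theorem hasDerivAt_eulerResonantPrimitive {p q c : ℂ} {k : ℤ}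
    (hres : (k : ℂ) * ((k : ℂ) - 1) = p * k + q) {z : ℂ → ℂ} {w : ℂ} (hw : w ≠ 0)
    (hz : DifferentiableAt ℂ z w) (hz' : DifferentiableAt ℂ (deriv z) w)
    (hode : w ^ 2 * deriv (deriv z) w = p * w * deriv z w + q * z w + c * w ^ k) :
    HasDerivAt (eulerResonantPrimitive p k z) (c * w⁻¹) w := by
  have hD : HasDerivAt (eulerResonantPrimitive p k z) _ w :=
    ((hasDerivAt_zpow (1 - k) w (.inl hw)).mul hz'.hasDerivAt).add
      (((hasDerivAt_zpow (-k) w (.inl hw)).mul hz.hasDerivAt).const_mul ((k : ℂ) - 1 - p))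
  refine hD.congr_deriv ?_
  have hpow : w ^ k * w ^ (-k) = 1 := by rw [zpow_neg, mul_inv_cancel₀ (zpow_ne_zero k hw)]
  rw [show 1 - k - 1 = -k by ring, sub_eq_add_neg 1 k, zpow_add₀ hw, zpow_one, zpow_sub_one₀ hw]
  field_simp
  push_cast
  linear_combination w ^ (-k) * hode + c * hpow - w ^ (-k) * z w * hres

theorem eq_zero_of_hasDerivAt_mul_inv_sub_on_sphere {H : ℂ → ℂ} {a c : ℂ} {R : ℝ} (hR : 0 < R)
    (hH : ∀ w ∈ sphere a R, HasDerivAt H (c * (w - a)⁻¹) w) : c = 0 := by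
  have hint := circleIntegral.integral_eq_zero_of_hasDerivWithinAt hR.le
    fun w hw => (hH w hw).hasDerivWithinAt
  rw [circleIntegral.integral_const_mul, circleIntegral.integral_sub_center_inv a hR.ne'] at hint
  simpa [Real.pi_ne_zero, I_ne_zero] using hint

theorem isOpen_annulus (r₁ r₂ : ℝ) : IsOpen {w : ℂ | r₁ < ‖w‖ ∧ ‖w‖ < r₂} :=
  isOpen_Ioo.preimage continuous_norm

theorem euler_resonance_no_holomorphic_solution_general
    (p q c : ℂ) (hc : c ≠ 0) (k : ℕ)
    (hres : (k : ℂ) * ((k : ℂ) - 1) = p * (k : ℂ) + q)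
    (r₁ r₂ : ℝ) (hr₁ : 0 < r₁) (hr₁₂ : r₁ < r₂)
    (z : ℂ → ℂ)
    (hz : DifferentiableOn ℂ z {w : ℂ | r₁ < ‖w‖ ∧ ‖w‖ < r₂}) :
    ¬ (∀ w : ℂ, r₁ < ‖w‖ → ‖w‖ < r₂ →
        w ^ 2 * deriv (deriv z) w = p * w * deriv z w + q * z w + c * w ^ k) := by
  intro hode
  have hopen := isOpen_annulus r₁ r₂
  have hz' := hz.deriv hopen
  obtain ⟨R, hR₁, hR₂⟩ := exists_between hr₁₂
  have hprim : ∀ w ∈ sphere (0 : ℂ) R,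
      HasDerivAt (eulerResonantPrimitive p k z) (c * (w - 0)⁻¹) w := by
    intro w hw
    rw [mem_sphere_zero_iff_norm] at hw
    have hmem : r₁ < ‖w‖ ∧ ‖w‖ < r₂ := hw ▸ ⟨hR₁, hR₂⟩
    rw [sub_zero]
    refine hasDerivAt_eulerResonantPrimitive (by exact_mod_cast hres)
      (norm_pos_iff.mp (hr₁.trans hmem.1)) ((hz w hmem).differentiableAt (hopen.mem_nhds hmem))
      ((hz' w hmem).differentiableAt (hopen.mem_nhds hmem)) ?_
    simpa using hode w hmem.1 hmem.2
  exact hc (eq_zero_of_hasDerivAt_mul_inv_sub_on_sphere (hr₁.trans hR₁) hprim)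

/-- **Resonance obstruction for the inhomogeneous Euler equation.**
If `k` is a positive integer that is a characteristic root of the Euler equation,
i.e. `k(k−1) = pk + q`, and `c ≠ 0`, then the equation `w²z'' = pwz' + qz + cwᵏ` has no
holomorphic solution on any annulus `{r₁ < |w| < r₂}` around the origin. -/
theorem euler_resonance_no_holomorphic_solution
    (p q c : ℂ) (hc : c ≠ 0) (k : ℕ) (hk : 0 < k)
    (hres : (k : ℂ) * ((k : ℂ) - 1) = p * (k : ℂ) + q)
    (r₁ r₂ : ℝ) (hr₁ : 0 < r₁) (hr₁₂ : r₁ < r₂)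
    (z : ℂ → ℂ)
    (hz : DifferentiableOn ℂ z {w : ℂ | r₁ < ‖w‖ ∧ ‖w‖ < r₂}) :
    ¬ (∀ w : ℂ, r₁ < ‖w‖ → ‖w‖ < r₂ →
        w ^ 2 * deriv (deriv z) w = p * w * deriv z w + q * z w + c * w ^ k) :=
  euler_resonance_no_holomorphic_solution_general p q c hc k hres r₁ r₂ hr₁ hr₁₂ z hz
end

section
/- Let p, q ∈ ℂ and 0 < r₁ < r₂. If the complex vector space of holomorphic functions z on the annulus A(r₁,r₂) = {w ∈ ℂ : r₁ < |w| < r₂} satisfying w²·z''(w) = p·w·z'(w) + q·z(w) for all w ∈ A(r₁,r₂) has dimension at least 2, then the polynomial λ² − (p+1)λ − q has two distinct roots, and both roots are integers. -/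
/-!
Write `Θ = w d/dw` and let `l₁, l₂` be the roots of `λ² − (p+1)λ − q`; the equation reads
`(Θ − l₁)(Θ − l₂) z = 0`, so `(Θ − l₂) z` is a `Θ`-eigenfunction with eigenvalue `l₁`.
Along a circle a `Θ`-eigenfunction with eigenvalue `l` picks up the factor `exp (2πil)`, so
on an annulus it vanishes unless `l = k ∈ ℤ`, and then it is `C w ^ k` because the annulus is
connected. If `l₁ ∉ ℤ`, both solutions are therefore eigenfunctions for `l₂` and are
proportional. If `l₁ = l₂ = k`, then `(Θ − k) z = C w ^ k` makes `z w⁻ᵏ` a primitive of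
`C / w`, so `C = 0` because `∮ dw / w = 2πi`, and again both solutions lie in the
one-dimensional eigenspace.
-/

open Complex Set Metric
open scoped Real

namespace EulerEquation

def annulus (r₁ r₂ : ℝ) : Set ℂ := {w : ℂ | r₁ < ‖w‖ ∧ ‖w‖ < r₂}

def IsEulerEigenOn (s : Set ℂ) (l : ℂ) (f : ℂ → ℂ) : Prop :=
  DifferentiableOn ℂ f s ∧ ∀ w ∈ s, w * deriv f w = l * f w

def IsEulerSolutionOn (p q : ℂ) (s : Set ℂ) (z : ℂ → ℂ) : Prop :=
  DifferentiableOn ℂ z s ∧ ∀ w ∈ s, w ^ 2 * deriv (deriv z) w = p * w * deriv z w + q * z w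

def IndepOn (s : Set ℂ) (f g : ℂ → ℂ) : Prop :=
  ∀ c₁ c₂ : ℂ, (∀ w ∈ s, c₁ * f w + c₂ * g w = 0) → c₁ = 0 ∧ c₂ = 0

open Polynomial in
lemma exists_add_eq_mul_eq {K : Type*} [Field K] [IsAlgClosed K] (b c : K) :
    ∃ l₁ l₂ : K, l₁ + l₂ = b ∧ l₁ * l₂ = c := by
  obtain ⟨l, hl⟩ := IsAlgClosed.exists_root (X ^ 2 - C b * X + C c)
    (ne_of_eq_of_ne (by compute_degree!) two_ne_zero)
  refine ⟨l, b - l, by ring, ?_⟩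
  simp only [IsRoot, eval_add, eval_sub, eval_pow, eval_mul, eval_X, eval_C] at hl
  linear_combination -hl

variable {f : ℂ → ℂ} {l : ℂ}

lemma IndepOn.not_eqOn_zero_left {s : Set ℂ} {g : ℂ → ℂ} (hind : IndepOn s f g) :
    ¬ EqOn f 0 s := fun hf =>
  one_ne_zero (hind 1 0 fun w hw => by simp [hf hw]).1

lemma mul_deriv_mul_zpow {w : ℂ} (hw : w ≠ 0) (hf : DifferentiableAt ℂ f w) (k : ℤ) :
    w * deriv (fun w => f w * w ^ (-k)) w = (w * deriv f w - k * f w) * w ^ (-k) := by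
  have h : HasDerivAt (fun w => f w * w ^ (-k)) _ w :=
    hf.hasDerivAt.mul (hasDerivAt_zpow (-k) w (Or.inl hw))
  rw [h.deriv, zpow_sub_one₀ hw]
  push_cast
  field_simp
  ring

section EulerOperator

variable {p q : ℂ} {s : Set ℂ} {z : ℂ → ℂ}

lemma IsEulerSolutionOn.isEulerEigenOn_shift (hs : IsOpen s) (hz : IsEulerSolutionOn p q s z)
    {l' : ℂ} (hsum : l + l' = p + 1) (hprod : l * l' = -q) :
    IsEulerEigenOn s l fun w => w * deriv z w - l' * z w := by
  have hz' : DifferentiableOn ℂ (deriv z) s := (hz.1.analyticOnNhd hs).deriv.differentiableOn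
  refine ⟨(differentiableOn_id.mul hz').sub (hz.1.const_mul l'), fun w hw => ?_⟩
  have h : HasDerivAt (fun w => w * deriv z w - l' * z w)
      (1 * deriv z w + w * deriv (deriv z) w - l' * deriv z w) w :=
    ((hasDerivAt_id w).mul (hz'.differentiableAt (hs.mem_nhds hw)).hasDerivAt).sub
      ((hz.1.differentiableAt (hs.mem_nhds hw)).hasDerivAt.const_mul l')
  rw [h.deriv]
  linear_combination hz.2 w hw - w * deriv z w * hsum + z w * hprod

lemma IsEulerSolutionOn.isEulerEigenOn_of_shift_eqOn_zero (hz : IsEulerSolutionOn p q s z)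
    (h : EqOn (fun w => w * deriv z w - l * z w) 0 s) : IsEulerEigenOn s l z :=
  ⟨hz.1, fun _ hw => sub_eq_zero.mp (h hw)⟩

end EulerOperator

section Annulus

variable {r₁ r₂ : ℝ}

lemma isOpen_annulus : IsOpen (annulus r₁ r₂) :=
  (isOpen_lt continuous_const continuous_norm).inter (isOpen_lt continuous_norm continuous_const)

lemma ne_zero_of_mem_annulus (h₀ : 0 ≤ r₁) {w : ℂ} (hw : w ∈ annulus r₁ r₂) : w ≠ 0 :=
  norm_pos_iff.mp (h₀.trans_lt hw.1)

lemma circleMap_mem_annulus {r : ℝ} (hr : (r : ℂ) ∈ annulus r₁ r₂) (t : ℝ) :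
    circleMap 0 r t ∈ annulus r₁ r₂ := by
  simpa [annulus] using hr

lemma ofReal_norm_mem_annulus {w : ℂ} (hw : w ∈ annulus r₁ r₂) :
    ((‖w‖ : ℝ) : ℂ) ∈ annulus r₁ r₂ := by
  simpa [annulus] using hw

lemma isPreconnected_annulus (h₀ : 0 ≤ r₁) : IsPreconnected (annulus r₁ r₂) := by
  have himage : annulus r₁ r₂ = (fun x : ℝ × ℝ => circleMap 0 x.1 x.2) '' (Ioo r₁ r₂ ×ˢ univ) := by
    ext w
    constructor
    · exact fun hw => ⟨(‖w‖, arg w), ⟨hw, trivial⟩, by simp [circleMap_zero, norm_mul_exp_arg_mul_I]⟩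
    · rintro ⟨⟨r, t⟩, ⟨hr, -⟩, rfl⟩
      simpa [annulus, abs_of_pos (h₀.trans_lt hr.1)] using hr
  rw [himage]
  exact (isPreconnected_Ioo.prod isPreconnected_univ).image _
    (by unfold circleMap; fun_prop : Continuous fun x : ℝ × ℝ => circleMap 0 x.1 x.2).continuousOn

lemma differentiableOn_mul_zpow_annulus (h₀ : 0 ≤ r₁) (hf : DifferentiableOn ℂ f (annulus r₁ r₂))
    (k : ℤ) : DifferentiableOn ℂ (fun w => f w * w ^ k) (annulus r₁ r₂) :=
  hf.mul (differentiableOn_zpow k _ (Or.inl fun h => ne_zero_of_mem_annulus h₀ h rfl))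

lemma IsEulerEigenOn.apply_circleMap (hf : IsEulerEigenOn (annulus r₁ r₂) l f) {r : ℝ}
    (hr : (r : ℂ) ∈ annulus r₁ r₂) (t : ℝ) :
    f (circleMap 0 r t) = exp (l * I * t) * f r := by
  set G : ℝ → ℂ := fun s => exp (-(l * I) * s) * f (circleMap 0 r s)
  have hG : ∀ s, HasDerivAt G 0 s := by
    intro s
    have hmem := circleMap_mem_annulus hr s
    have hfs := (hf.1.differentiableAt (isOpen_annulus.mem_nhds hmem)).hasDerivAt.comp s
      (hasDerivAt_circleMap 0 r s)
    have hexp : HasDerivAt (fun s : ℝ => exp (-(l * I) * s)) (exp (-(l * I) * s) * -(l * I)) s := by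
      simpa using (((hasDerivAt_id (s : ℂ)).const_mul (-(l * I))).cexp).comp_ofReal
    refine (hexp.mul hfs).congr_deriv ?_
    rw [Function.comp_apply]
    linear_combination (exp (-(l * I) * s) * I) * hf.2 _ hmem
  have hGt := is_const_of_deriv_eq_zero (fun s => (hG s).differentiableAt)
    (fun s => (hG s).deriv) t 0
  simp only [G, ofReal_zero, mul_zero, exp_zero, one_mul, circleMap_zero, zero_mul, mul_one] at hGt
  rw [circleMap_zero, ← hGt, ← mul_assoc, ← exp_add]
  ring_nf
  rw [exp_zero, one_mul]

lemma IsEulerEigenOn.eqOn_zero_of_forall_ne_int (hf : IsEulerEigenOn (annulus r₁ r₂) l f)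
    (hl : ∀ k : ℤ, l ≠ k) : EqOn f 0 (annulus r₁ r₂) := by
  intro w hw
  have hr := ofReal_norm_mem_annulus hw
  have hmonodromy : exp (l * I * (2 * π : ℝ)) ≠ 1 := by
    rw [Ne, exp_eq_one_iff]
    rintro ⟨n, hn⟩
    refine hl n (mul_right_cancel₀ two_pi_I_ne_zero ?_)
    push_cast at hn
    linear_combination hn
  have hfr : f ‖w‖ = 0 := by
    have h := hf.apply_circleMap hr (2 * π)
    rw [← zero_add (2 * π), periodic_circleMap 0 _ 0, circleMap_zero, ofReal_zero, zero_mul,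
      exp_zero, mul_one, zero_add] at h
    have h' : (exp (l * I * (2 * π : ℝ)) - 1) * f ‖w‖ = 0 := by linear_combination -h
    exact (mul_eq_zero.mp h').resolve_left (sub_ne_zero.mpr hmonodromy)
  rw [← norm_mul_exp_arg_mul_I w, ← circleMap_zero, hf.apply_circleMap hr, hfr, mul_zero]
  rfl

lemma IsEulerEigenOn.exists_eqOn_const_mul_zpow (h₀ : 0 ≤ r₁) {k : ℤ}
    (hf : IsEulerEigenOn (annulus r₁ r₂) k f) :
    ∃ C : ℂ, ∀ w ∈ annulus r₁ r₂, f w = C * w ^ k := by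
  have hderiv : EqOn (deriv fun w => f w * w ^ (-k)) 0 (annulus r₁ r₂) := fun w hw => by
    have hw₀ := ne_zero_of_mem_annulus h₀ hw
    have h := mul_deriv_mul_zpow hw₀ (hf.1.differentiableAt (isOpen_annulus.mem_nhds hw)) k
    rw [hf.2 w hw, sub_self, zero_mul] at h
    exact (mul_eq_zero.mp h).resolve_left hw₀
  obtain ⟨C, hC⟩ := isOpen_annulus.exists_is_const_of_deriv_eq_zero (isPreconnected_annulus h₀)
    (differentiableOn_mul_zpow_annulus h₀ hf.1 (-k)) hderiv
  refine ⟨C, fun w hw => ?_⟩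
  rw [← hC w hw, zpow_neg, inv_mul_cancel_right₀ (zpow_ne_zero k (ne_zero_of_mem_annulus h₀ hw))]

lemma eq_zero_of_forall_mul_deriv_eq (h₀ : 0 ≤ r₁) (h₁₂ : r₁ < r₂) {g : ℂ → ℂ} {a : ℂ}
    (hg : DifferentiableOn ℂ g (annulus r₁ r₂)) (hga : ∀ w ∈ annulus r₁ r₂, w * deriv g w = a) :
    a = 0 := by
  obtain ⟨r, hr₁, hr₂⟩ := exists_between h₁₂
  have hr : 0 < r := h₀.trans_lt hr₁
  have hsphere : sphere (0 : ℂ) r ⊆ annulus r₁ r₂ := fun z hz => by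
    rw [mem_sphere_zero_iff_norm] at hz
    exact ⟨hz ▸ hr₁, hz ▸ hr₂⟩
  have hexact : ∮ z in C(0, r), deriv g z = 0 :=
    circleIntegral.integral_eq_zero_of_hasDerivWithinAt hr.le fun z hz =>
      (hg.differentiableAt (isOpen_annulus.mem_nhds (hsphere hz))).hasDerivAt.hasDerivWithinAt
  have hlog : ∮ z in C(0, r), deriv g z = a * (2 * π * I) := by
    rw [← circleIntegral.integral_sub_inv_of_mem_ball (mem_ball_self hr),
      ← circleIntegral.integral_const_mul]
    refine circleIntegral.integral_congr hr.le fun z hz => ?_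
    have hz₀ : z ≠ 0 := ne_zero_of_mem_annulus h₀ (hsphere hz)
    rw [sub_zero, ← hga z (hsphere hz)]
    field_simp
  rw [hexact] at hlog
  exact (mul_eq_zero.mp hlog.symm).resolve_right two_pi_I_ne_zero

lemma not_indepOn_of_isEulerEigenOn (h₀ : 0 ≤ r₁) {g : ℂ → ℂ}
    (hf : IsEulerEigenOn (annulus r₁ r₂) l f) (hg : IsEulerEigenOn (annulus r₁ r₂) l g) :
    ¬ IndepOn (annulus r₁ r₂) f g := by
  intro hind
  rcases em (∃ k : ℤ, l = k) with ⟨k, rfl⟩ | hl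
  · obtain ⟨C, hC⟩ := hf.exists_eqOn_const_mul_zpow h₀
    obtain ⟨D, hD⟩ := hg.exists_eqOn_const_mul_zpow h₀
    obtain ⟨-, hC₀⟩ := hind D (-C) fun w hw => by rw [hC w hw, hD w hw]; ring
    exact hind.not_eqOn_zero_left fun w hw => by simp [hC w hw, neg_eq_zero.mp hC₀]
  · exact hind.not_eqOn_zero_left (hf.eqOn_zero_of_forall_ne_int fun k hk => hl ⟨k, hk⟩)

variable {p q : ℂ} {z : ℂ → ℂ}

lemma exists_int_eq_of_indepOn (h₀ : 0 ≤ r₁) {z₁ z₂ : ℂ → ℂ}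
    (hz₁ : IsEulerSolutionOn p q (annulus r₁ r₂) z₁)
    (hz₂ : IsEulerSolutionOn p q (annulus r₁ r₂) z₂) (hind : IndepOn (annulus r₁ r₂) z₁ z₂)
    {l' : ℂ} (hsum : l + l' = p + 1) (hprod : l * l' = -q) : ∃ k : ℤ, l = k := by
  by_contra! hl
  have hshift₁ := (hz₁.isEulerEigenOn_shift isOpen_annulus hsum hprod).eqOn_zero_of_forall_ne_int hl
  have hshift₂ := (hz₂.isEulerEigenOn_shift isOpen_annulus hsum hprod).eqOn_zero_of_forall_ne_int hl
  exact not_indepOn_of_isEulerEigenOn h₀ (hz₁.isEulerEigenOn_of_shift_eqOn_zero hshift₁)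
    (hz₂.isEulerEigenOn_of_shift_eqOn_zero hshift₂) hind

lemma IsEulerSolutionOn.isEulerEigenOn_of_double_root (h₀ : 0 ≤ r₁) (h₁₂ : r₁ < r₂) {k : ℤ}
    (hz : IsEulerSolutionOn p q (annulus r₁ r₂) z) (hsum : (k : ℂ) + k = p + 1)
    (hprod : (k : ℂ) * k = -q) : IsEulerEigenOn (annulus r₁ r₂) k z := by
  obtain ⟨C, hC⟩ :=
    (hz.isEulerEigenOn_shift isOpen_annulus hsum hprod).exists_eqOn_const_mul_zpow h₀
  have hC₀ : C = 0 := by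
    refine eq_zero_of_forall_mul_deriv_eq h₀ h₁₂ (differentiableOn_mul_zpow_annulus h₀ hz.1 (-k))
      fun w hw => ?_
    rw [mul_deriv_mul_zpow (ne_zero_of_mem_annulus h₀ hw)
      (hz.1.differentiableAt (isOpen_annulus.mem_nhds hw)), hC w hw, zpow_neg,
      mul_inv_cancel_right₀ (zpow_ne_zero k (ne_zero_of_mem_annulus h₀ hw))]
  refine hz.isEulerEigenOn_of_shift_eqOn_zero fun w hw => ?_
  simp [hC w hw, hC₀]

end Annulus

end EulerEquation

open EulerEquation

/-- **Two independent single-valued solutions of an Euler equation force distinct integer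
characteristic roots.** If the homogeneous Euler equation `w²z'' = pwz' + qz` admits two
solutions, holomorphic on the annulus `{r₁ < |w| < r₂}`, that are linearly independent over `ℂ`
(so that the solution space on the annulus has dimension at least `2`), then the characteristic
polynomial `λ² − (p+1)λ − q` has two distinct roots, both of which are integers. -/
theorem euler_two_solutions_distinct_integer_roots
    (p q : ℂ) (r₁ r₂ : ℝ) (hr₁ : 0 < r₁) (hr₁₂ : r₁ < r₂)
    (z₁ z₂ : ℂ → ℂ)
    (hz₁ : DifferentiableOn ℂ z₁ {w : ℂ | r₁ < ‖w‖ ∧ ‖w‖ < r₂})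
    (hz₂ : DifferentiableOn ℂ z₂ {w : ℂ | r₁ < ‖w‖ ∧ ‖w‖ < r₂})
    (heq₁ : ∀ w : ℂ, r₁ < ‖w‖ → ‖w‖ < r₂ →
      w ^ 2 * deriv (deriv z₁) w = p * w * deriv z₁ w + q * z₁ w)
    (heq₂ : ∀ w : ℂ, r₁ < ‖w‖ → ‖w‖ < r₂ →
      w ^ 2 * deriv (deriv z₂) w = p * w * deriv z₂ w + q * z₂ w)
    (hindep : ∀ c₁ c₂ : ℂ,
      (∀ w : ℂ, r₁ < ‖w‖ → ‖w‖ < r₂ → c₁ * z₁ w + c₂ * z₂ w = 0) →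
      c₁ = 0 ∧ c₂ = 0) :
    ∃ k₁ k₂ : ℤ, k₁ ≠ k₂ ∧
      (k₁ : ℂ) + (k₂ : ℂ) = p + 1 ∧ (k₁ : ℂ) * (k₂ : ℂ) = -q := by
  have hsol₁ : IsEulerSolutionOn p q (annulus r₁ r₂) z₁ := ⟨hz₁, fun w hw => heq₁ w hw.1 hw.2⟩
  have hsol₂ : IsEulerSolutionOn p q (annulus r₁ r₂) z₂ := ⟨hz₂, fun w hw => heq₂ w hw.1 hw.2⟩
  have hind : IndepOn (annulus r₁ r₂) z₁ z₂ := fun c₁ c₂ h =>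
    hindep c₁ c₂ fun w h₁ h₂ => h w ⟨h₁, h₂⟩
  obtain ⟨l₁, l₂, hsum, hprod⟩ := exists_add_eq_mul_eq (p + 1) (-q)
  obtain ⟨k₁, rfl⟩ := exists_int_eq_of_indepOn hr₁.le hsol₁ hsol₂ hind hsum hprod
  obtain ⟨k₂, rfl⟩ := exists_int_eq_of_indepOn hr₁.le hsol₁ hsol₂ hind
    ((add_comm _ _).trans hsum) ((mul_comm _ _).trans hprod)
  refine ⟨k₁, k₂, fun hk => ?_, hsum, hprod⟩
  subst hk
  exact not_indepOn_of_isEulerEigenOn hr₁.le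
    (hsol₁.isEulerEigenOn_of_double_root hr₁.le hr₁₂ hsum hprod)
    (hsol₂.isEulerEigenOn_of_double_root hr₁.le hr₁₂ hsum hprod) hind
end

section
/- Let ε > 0, let g be holomorphic on the disc {w ∈ ℂ : |w| < ε}, and let u be holomorphic and not identically zero on the punctured disc {w ∈ ℂ : 0 < |w| < ε}, satisfying w·u'(w) = g(w)·u(w) for all 0 < |w| < ε. Then n := g(0) is an integer, and there exists a holomorphic function v on {|w| < ε} with v(0) ≠ 0 such that u(w) = wⁿ·v(w) for all 0 < |w| < ε; in particular u extends meromorphically across w = 0. -/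
/-!
Write `g = g 0 + w h` with `h = dslope g 0` holomorphic on the disc and let `F` be a primitive
of `h` there; then `ψ = u e^{-F}` solves the Euler equation `w ψ' = g 0 ψ`. Along a circle,
`t ↦ ψ (w₀ e^{it})` solves `φ' = i (g 0) φ`, so `φ (2π) = φ 0 e^{2πi g 0}`, and since `φ` is
`2π`-periodic and `φ 0 ≠ 0` this forces `g 0 = n ∈ ℤ`. Then `ψ w⁻ⁿ` has zero derivative on the
connected punctured disc, so `ψ = A wⁿ` with `A ≠ 0`, and `v = A e^F`.
-/

open Complex Metric Set
open scoped Real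

theorem isPreconnected_ball_diff_center {E : Type*} [NormedAddCommGroup E] [NormedSpace ℝ E]
    (h : 1 < Module.rank ℝ E) (x : E) (r : ℝ) : IsPreconnected (ball x r \ {x}) := by
  have hpolar : ball x r \ {x} =
      (fun p : ℝ × E => x + p.1 • p.2) '' (Ioo 0 r ×ˢ sphere 0 1) := by
    ext y
    constructor
    · rintro ⟨hyr, hyx⟩
      have hy : 0 < ‖y - x‖ := norm_pos_iff.2 (sub_ne_zero.2 hyx)
      refine ⟨(‖y - x‖, ‖y - x‖⁻¹ • (y - x)), ⟨⟨hy, by rwa [← dist_eq_norm]⟩, ?_⟩, ?_⟩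
      · simp [norm_smul, hy.ne']
      · simp [smul_smul, hy.ne']
    · rintro ⟨⟨s, z⟩, ⟨⟨hs0, hsr⟩, hz⟩, rfl⟩
      rw [mem_sphere_zero_iff_norm] at hz
      refine ⟨?_, ?_⟩
      · simpa [norm_smul, hz, abs_of_pos hs0] using hsr
      · simpa [hs0.ne'] using ne_zero_of_norm_ne_zero (hz.trans_ne one_ne_zero)
  rw [hpolar]
  exact (isPreconnected_Ioo.prod (isPreconnected_sphere h 0 1)).image _ (by fun_prop)

theorem exists_int_eq_of_forall_mem_sphere_mul_deriv_eq {f : ℂ → ℂ} {c w₀ : ℂ}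
    (hw₀ : f w₀ ≠ 0)
    (hf : ∀ z ∈ sphere (0 : ℂ) ‖w₀‖, DifferentiableAt ℂ f z ∧ z * deriv f z = c * f z) :
    ∃ n : ℤ, c = n := by
  set φ : ℝ → ℂ := fun t => f (w₀ * exp (t * I)) * exp (-(c * t * I))
  have hφ : ∀ t : ℝ, HasDerivAt φ 0 t := by
    intro t
    have hz : w₀ * exp (t * I) ∈ sphere (0 : ℂ) ‖w₀‖ := by
      simp [norm_exp_ofReal_mul_I]
    obtain ⟨hfd, hfz⟩ := hf _ hz
    have hγ : HasDerivAt (fun z : ℂ => w₀ * exp (z * I)) (w₀ * exp (t * I) * I) t := by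
      simpa [mul_assoc] using ((hasDerivAt_id (t : ℂ)).mul_const I).cexp.const_mul w₀
    have he : HasDerivAt (fun z : ℂ => exp (-(c * z * I))) (exp (-(c * t * I)) * -(c * I)) t := by
      simpa using (((hasDerivAt_id (t : ℂ)).const_mul c).mul_const I).neg.cexp
    refine (((hfd.hasDerivAt.comp (t : ℂ) hγ).mul he).comp_ofReal).congr_deriv ?_
    rw [Function.comp_apply]
    linear_combination (I * exp (-(c * t * I))) * hfz
  have hper : φ (2 * π) = φ 0 :=
    is_const_of_deriv_eq_zero (fun t => (hφ t).differentiableAt) (fun t => (hφ t).deriv) _ _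
  have hexp : exp (-c * (2 * π * I)) = 1 := by
    refine mul_left_cancel₀ hw₀ ?_
    simp only [φ] at hper
    push_cast at hper
    rw [exp_two_pi_mul_I] at hper
    simpa [mul_comm, mul_left_comm, mul_assoc] using hper
  obtain ⟨n, hn⟩ := exp_eq_one_iff.1 hexp
  refine ⟨-n, ?_⟩
  have h2πI : 2 * π * I ≠ 0 := by simp [Real.pi_ne_zero, I_ne_zero]
  push_cast
  linear_combination -(mul_right_cancel₀ h2πI hn : -c = n)

theorem IsOpen.exists_eqOn_const_mul_zpow_of_mul_deriv_eq {f : ℂ → ℂ} {U : Set ℂ} (hU : IsOpen U)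
    (hUc : IsPreconnected U) (h0 : (0 : ℂ) ∉ U) {n : ℤ} (hf : DifferentiableOn ℂ f U)
    (hode : ∀ z ∈ U, z * deriv f z = n * f z) :
    ∃ A : ℂ, EqOn f (fun z => A * z ^ n) U := by
  have hz : ∀ z ∈ U, z ≠ 0 := fun z hz h => h0 (h ▸ hz)
  have hderiv : ∀ z ∈ U, HasDerivAt (fun z => f z * z ^ (-n)) 0 z := by
    intro z hzU
    have hpow : z ^ (-n) = z ^ (-n - 1) * z := by
      rw [zpow_sub_one₀ (hz z hzU), inv_mul_cancel_right₀ (hz z hzU)]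
    refine (((hf z hzU).differentiableAt (hU.mem_nhds hzU)).hasDerivAt.fun_mul
      (hasDerivAt_zpow (-n) z (Or.inl (hz z hzU)))).congr_deriv ?_
    rw [hpow]
    push_cast
    linear_combination (z ^ (-n - 1)) * hode z hzU
  obtain ⟨A, hA⟩ := hU.exists_is_const_of_deriv_eq_zero hUc
    (fun z hzU => (hderiv z hzU).differentiableAt.differentiableWithinAt)
    (fun z hzU => (hderiv z hzU).deriv)
  refine ⟨A, fun z hzU => ?_⟩
  simp only [← hA z hzU, mul_assoc, ← zpow_add₀ (hz z hzU), neg_add_cancel, zpow_zero, mul_one]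

theorem mul_deriv_mul_exp_neg_eq_of_hasDerivAt_dslope {u g F : ℂ → ℂ} {w : ℂ} (hw : w ≠ 0)
    (hu : DifferentiableAt ℂ u w) (hF : HasDerivAt F (dslope g 0 w) w)
    (hode : w * deriv u w = g w * u w) :
    DifferentiableAt ℂ (fun z => u z * exp (-F z)) w ∧
      w * deriv (fun z => u z * exp (-F z)) w = g 0 * (u w * exp (-F w)) := by
  have hψ := hu.hasDerivAt.fun_mul hF.fun_neg.cexp
  refine ⟨hψ.differentiableAt, ?_⟩
  have hslope : w * dslope g 0 w = g w - g 0 := by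
    rw [dslope_of_ne g hw, slope_def_field, sub_zero, mul_div_cancel₀ _ hw]
  rw [hψ.deriv]
  linear_combination exp (-F w) * hode - u w * exp (-F w) * hslope

/-- **A single-valued solution of `wu' = gu` extends meromorphically and forces an integer
residue.** If `g` is holomorphic on the disc `{|w| < ε}` and `u` is holomorphic and not
identically zero on the punctured disc `{0 < |w| < ε}` with `wu'(w) = g(w)u(w)` there, then
`n := g(0)` is an integer and `u(w) = wⁿv(w)` for some holomorphic `v` on `{|w| < ε}` with
`v(0) ≠ 0`; in particular `u` extends meromorphically across `w = 0`. -/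
theorem first_order_singular_ode_integer_residue
    (ε : ℝ) (hε : 0 < ε) (g u : ℂ → ℂ)
    (hg : DifferentiableOn ℂ g {w : ℂ | ‖w‖ < ε})
    (hu : DifferentiableOn ℂ u {w : ℂ | 0 < ‖w‖ ∧ ‖w‖ < ε})
    (hune : ∃ w : ℂ, 0 < ‖w‖ ∧ ‖w‖ < ε ∧ u w ≠ 0)
    (hode : ∀ w : ℂ, 0 < ‖w‖ → ‖w‖ < ε →
      w * deriv u w = g w * u w) :
    ∃ n : ℤ, g 0 = (n : ℂ) ∧
      ∃ v : ℂ → ℂ, DifferentiableOn ℂ v {w : ℂ | ‖w‖ < ε} ∧ v 0 ≠ 0 ∧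
        ∀ w : ℂ, 0 < ‖w‖ → ‖w‖ < ε → u w = w ^ n * v w := by
  obtain ⟨w₁, hw₁0, hw₁ε, hw₁u⟩ := hune
  set P := {w : ℂ | 0 < ‖w‖ ∧ ‖w‖ < ε}
  have hP : P = ball 0 ε \ {0} := by ext; simp [P, and_comm]
  have hPopen : IsOpen P := hP ▸ isOpen_ball.sdiff isClosed_singleton
  have hD : {w : ℂ | ‖w‖ < ε} = ball 0 ε := by ext; simp
  rw [hD] at hg ⊢
  obtain ⟨F, hF⟩ := ((differentiableOn_dslope (ball_mem_nhds 0 hε)).2 hg).isExactOn_ball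
  set ψ : ℂ → ℂ := fun z => u z * exp (-F z)
  have hψ : ∀ z ∈ P, DifferentiableAt ℂ ψ z ∧ z * deriv ψ z = g 0 * ψ z := fun z hz =>
    mul_deriv_mul_exp_neg_eq_of_hasDerivAt_dslope (norm_pos_iff.1 hz.1)
      (hu.differentiableAt (hPopen.mem_nhds hz)) (hF z (mem_ball_zero_iff.2 hz.2))
      (hode z hz.1 hz.2)
  have hψw₁ : ψ w₁ ≠ 0 := mul_ne_zero hw₁u (exp_ne_zero _)
  obtain ⟨n, hn⟩ := exists_int_eq_of_forall_mem_sphere_mul_deriv_eq hψw₁ fun z hz =>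
    hψ z (by rw [mem_sphere_zero_iff_norm] at hz; exact ⟨hz ▸ hw₁0, hz ▸ hw₁ε⟩)
  obtain ⟨A, hA⟩ := hPopen.exists_eqOn_const_mul_zpow_of_mul_deriv_eq
    (hP ▸ isPreconnected_ball_diff_center (by simp) 0 ε) (by simp [P])
    (fun z hz => (hψ z hz).1.differentiableWithinAt) (fun z hz => hn ▸ (hψ z hz).2)
  have hA₀ : A ≠ 0 := fun hA₀ => hψw₁ (by simpa [hA₀] using hA ⟨hw₁0, hw₁ε⟩)
  refine ⟨n, hn, fun z => A * exp (F z),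
    fun z hz => ((hF z hz).differentiableAt.cexp.const_mul A).differentiableWithinAt,
    mul_ne_zero hA₀ (exp_ne_zero _), fun w hw0 hwε => ?_⟩
  calc u w = ψ w * exp (F w) := by
        simp only [ψ, mul_assoc, ← exp_add, neg_add_cancel, exp_zero, mul_one]
    _ = w ^ n * (A * exp (F w)) := by rw [hA ⟨hw0, hwε⟩]; ring
end

section
/- Let D₁, D₂ ⊆ ℂ be open discs and f, g holomorphic functions on D₁ × D₂. Denote by f_z, f_zz the first and second partial derivatives in the first variable (and likewise for g). Assume f_z(z,w) ≠ 0 for all (z,w) ∈ D₁ × D₂ and f_z·g_zz − g_z·f_zz ≡ 0 on D₁ × D₂. Then there exist holomorphic functions λ, μ on D₂ such that g(z,w) = λ(w)·f(z,w) + μ(w) for all (z,w) ∈ D₁ × D₂. -/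
/-!
For fixed `w`, the vanishing Wronskian `f_z g_zz - g_z f_zz` says that `g_z / f_z` has zero
`z`-derivative, so on the connected disc `D₁` we get `g_z = λ(w) f_z` and then
`g = λ(w) f + μ(w)`. Regularity of `λ` in `w` comes from solving the relation at two points
`z₀, z₁` where `f(·, w)` takes different values: `λ = (g(z₀,·) - g(z₁,·)) / (f(z₀,·) - f(z₁,·))`
locally, and such points exist because `f_z ≠ 0`.
-/

/-- Partial derivative in the first variable: `F_z`. -/
noncomputable def pdz (F : ℂ → ℂ → ℂ) (z w : ℂ) : ℂ := deriv (fun z' => F z' w) z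

/-- Second partial derivative in the first variable: `F_zz`. -/
noncomputable def pdzz (F : ℂ → ℂ → ℂ) (z w : ℂ) : ℂ := deriv (fun z' => pdz F z' w) z

open Set Filter Topology Metric

section OneVariable

variable {𝕜 : Type*} [RCLike 𝕜] {s : Set 𝕜} {c : 𝕜}

theorem IsOpen.eqOn_div_mul_of_wronskian_eq_zero {φ ψ : 𝕜 → 𝕜} (hs : IsOpen s)
    (hs' : IsPreconnected s) (hφ : DifferentiableOn 𝕜 φ s) (hψ : DifferentiableOn 𝕜 ψ s)
    (hφ0 : ∀ x ∈ s, φ x ≠ 0) (hW : ∀ x ∈ s, φ x * deriv ψ x - ψ x * deriv φ x = 0)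
    (hc : c ∈ s) : EqOn ψ (fun x => ψ c / φ c * φ x) s := by
  intro x hx
  have hquot : EqOn (deriv fun y => ψ y / φ y) 0 s := fun y hy => by
    rw [deriv_fun_div (hψ.differentiableAt (hs.mem_nhds hy))
      (hφ.differentiableAt (hs.mem_nhds hy)) (hφ0 y hy), Pi.zero_apply, mul_comm (deriv ψ y),
      hW y hy, zero_div]
  have hconst : ψ x / φ x = ψ c / φ c :=
    hs.is_const_of_deriv_eq_zero hs' (hψ.div hφ hφ0) hquot hx hc
  show ψ x = ψ c / φ c * φ x
  rw [← hconst, div_mul_cancel₀ _ (hφ0 x hx)]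

theorem IsOpen.eqOn_affine_of_wronskian_deriv_eq_zero {f g : 𝕜 → 𝕜} (hs : IsOpen s)
    (hs' : IsPreconnected s) (hf : DifferentiableOn 𝕜 f s) (hg : DifferentiableOn 𝕜 g s)
    (hf' : DifferentiableOn 𝕜 (deriv f) s) (hg' : DifferentiableOn 𝕜 (deriv g) s)
    (hf0 : ∀ z ∈ s, deriv f z ≠ 0)
    (hW : ∀ z ∈ s, deriv f z * deriv (deriv g) z - deriv g z * deriv (deriv f) z = 0)
    (hc : c ∈ s) :
    EqOn g (fun z => deriv g c / deriv f c * f z + (g c - deriv g c / deriv f c * f c)) s := by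
  have hderiv := hs.eqOn_div_mul_of_wronskian_eq_zero hs' hf' hg' hf0 hW hc
  refine hs.eqOn_of_deriv_eq hs' hg ((hf.const_mul _).add_const _) (fun z hz => ?_) hc
    (by ring)
  rw [hderiv hz, deriv_add_const, deriv_const_mul _ (hf.differentiableAt (hs.mem_nhds hz))]

end OneVariable

theorem exists_ne_of_deriv_ne_zero {𝕜 F : Type*} [NontriviallyNormedField 𝕜]
    [NormedAddCommGroup F] [NormedSpace 𝕜 F] {f : 𝕜 → F} {s : Set 𝕜} {c : 𝕜} (hs : s ∈ 𝓝 c)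
    (hf : deriv f c ≠ 0) : ∃ z ∈ s, f z ≠ f c := by
  by_contra! hconst
  exact hf (by simpa using (eventuallyEq_of_mem hs hconst).deriv_eq)

section Coefficients

variable {𝕜 E : Type*} [NontriviallyNormedField 𝕜] [NormedAddCommGroup E] [NormedSpace 𝕜 E]
  {t : Set E}

theorem DifferentiableWithinAt.of_eventuallyEq_mul {u v lam : E → 𝕜} {x : E}
    (hu : DifferentiableWithinAt 𝕜 u t x) (hv : DifferentiableWithinAt 𝕜 v t x) (hv0 : v x ≠ 0)
    (h : ∀ᶠ y in 𝓝[t] x, u y = lam y * v y) (hx : x ∈ t) : DifferentiableWithinAt 𝕜 lam t x := by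
  have hlam : lam =ᶠ[𝓝[t] x] u * v⁻¹ := by
    filter_upwards [h, hv.continuousWithinAt.tendsto.eventually_ne hv0] with y hy hvy
    rw [Pi.mul_apply, Pi.inv_apply, hy, mul_inv_cancel_right₀ hvy]
  exact (hu.mul (hv.inv hv0)).congr_of_eventuallyEq_of_mem hlam hx

theorem differentiableOn_coeffs_of_eq_mul_add {α : Type*} {f g : α → E → 𝕜} {lam mu : E → 𝕜}
    {s : Set α} (hf : ∀ z ∈ s, DifferentiableOn 𝕜 (f z) t)
    (hg : ∀ z ∈ s, DifferentiableOn 𝕜 (g z) t)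
    (hnonconst : ∀ w ∈ t, ∃ z₀ ∈ s, ∃ z₁ ∈ s, f z₀ w ≠ f z₁ w)
    (hrel : ∀ w ∈ t, ∀ z ∈ s, g z w = lam w * f z w + mu w) :
    DifferentiableOn 𝕜 lam t ∧ DifferentiableOn 𝕜 mu t := by
  have hlam : DifferentiableOn 𝕜 lam t := fun w hw => by
    obtain ⟨z₀, hz₀, z₁, hz₁, hne⟩ := hnonconst w hw
    refine ((hg z₀ hz₀).sub (hg z₁ hz₁) w hw).of_eventuallyEq_mul
      ((hf z₀ hz₀).sub (hf z₁ hz₁) w hw) (sub_ne_zero.mpr hne) ?_ hw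
    filter_upwards [self_mem_nhdsWithin] with w' hw'
    rw [Pi.sub_apply, Pi.sub_apply, hrel w' hw' z₀ hz₀, hrel w' hw' z₁ hz₁]
    ring
  refine ⟨hlam, fun w hw => ?_⟩
  obtain ⟨z₀, hz₀, -⟩ := hnonconst w hw
  refine ((hg z₀ hz₀).sub (hlam.mul (hf z₀ hz₀))).congr (fun w' hw' => ?_) w hw
  rw [Pi.sub_apply, Pi.mul_apply, hrel w' hw' z₀ hz₀]
  ring

end Coefficients

section Slices

variable {𝕜 E₁ E₂ G : Type*} [NontriviallyNormedField 𝕜] [NormedAddCommGroup E₁]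
  [NormedSpace 𝕜 E₁] [NormedAddCommGroup E₂] [NormedSpace 𝕜 E₂] [NormedAddCommGroup G]
  [NormedSpace 𝕜 G] {Φ : E₁ → E₂ → G} {s : Set E₁} {t : Set E₂}

theorem DifferentiableOn.curry_left
    (hΦ : DifferentiableOn 𝕜 (fun p : E₁ × E₂ => Φ p.1 p.2) (s ×ˢ t))
    {w : E₂} (hw : w ∈ t) : DifferentiableOn 𝕜 (fun z => Φ z w) s :=
  hΦ.comp (differentiableOn_id.prodMk (differentiableOn_const w)) fun _ hz => ⟨hz, hw⟩

theorem DifferentiableOn.curry_right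
    (hΦ : DifferentiableOn 𝕜 (fun p : E₁ × E₂ => Φ p.1 p.2) (s ×ˢ t))
    {z : E₁} (hz : z ∈ s) : DifferentiableOn 𝕜 (Φ z) t :=
  hΦ.comp ((differentiableOn_const z).prodMk differentiableOn_id) fun _ hw => ⟨hz, hw⟩

end Slices

theorem affine_dependence_of_wronskian_vanishing_general
    (c₁ c₂ : ℂ) (r₁ r₂ : ℝ) (hr₁ : 0 < r₁)
    (f g : ℂ → ℂ → ℂ)
    (hf : DifferentiableOn ℂ (fun p : ℂ × ℂ => f p.1 p.2)
      (Metric.ball c₁ r₁ ×ˢ Metric.ball c₂ r₂))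
    (hg : DifferentiableOn ℂ (fun p : ℂ × ℂ => g p.1 p.2)
      (Metric.ball c₁ r₁ ×ˢ Metric.ball c₂ r₂))
    (hfz : ∀ z ∈ Metric.ball c₁ r₁, ∀ w ∈ Metric.ball c₂ r₂, pdz f z w ≠ 0)
    (hI0 : ∀ z ∈ Metric.ball c₁ r₁, ∀ w ∈ Metric.ball c₂ r₂,
      pdz f z w * pdzz g z w - pdz g z w * pdzz f z w = 0) :
    ∃ lam mu : ℂ → ℂ,
      DifferentiableOn ℂ lam (Metric.ball c₂ r₂) ∧
      DifferentiableOn ℂ mu (Metric.ball c₂ r₂) ∧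
      ∀ z ∈ Metric.ball c₁ r₁, ∀ w ∈ Metric.ball c₂ r₂,
        g z w = lam w * f z w + mu w := by
  have hc₁ : c₁ ∈ ball c₁ r₁ := mem_ball_self hr₁
  set lam : ℂ → ℂ := fun w => pdz g c₁ w / pdz f c₁ w
  set mu : ℂ → ℂ := fun w => g c₁ w - lam w * f c₁ w
  have hrel : ∀ w ∈ ball c₂ r₂, ∀ z ∈ ball c₁ r₁, g z w = lam w * f z w + mu w := by
    intro w hw
    have hfw := hf.curry_left hw
    have hgw := hg.curry_left hw
    exact isOpen_ball.eqOn_affine_of_wronskian_deriv_eq_zero (convex_ball c₁ r₁).isPreconnected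
      hfw hgw (hfw.deriv isOpen_ball) (hgw.deriv isOpen_ball) (fun z hz => hfz z hz w hw)
      (fun z hz => hI0 z hz w hw) hc₁
  have hnonconst : ∀ w ∈ ball c₂ r₂, ∃ z₀ ∈ ball c₁ r₁, ∃ z₁ ∈ ball c₁ r₁, f z₀ w ≠ f z₁ w := by
    intro w hw
    obtain ⟨z, hz, hne⟩ := exists_ne_of_deriv_ne_zero (isOpen_ball.mem_nhds hc₁) (hfz c₁ hc₁ w hw)
    exact ⟨z, hz, c₁, hc₁, hne⟩
  obtain ⟨hlam, hmu⟩ := differentiableOn_coeffs_of_eq_mul_add (fun z hz => hf.curry_right hz)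
    (fun z hz => hg.curry_right hz) hnonconst hrel
  exact ⟨lam, mu, hlam, hmu, fun z hz w hw => hrel w hw z hz⟩

/-- **Vanishing of `I₀` forces affine dependence of `g` on `f`.**
Let `f, g` be holomorphic on a product of discs `D₁ × D₂` with `f_z ≠ 0` everywhere and
`f_z·g_zz − g_z·f_zz ≡ 0`. Then `g(z,w) = λ(w)f(z,w) + μ(w)` for some holomorphic
`λ, μ` on `D₂`. -/
theorem affine_dependence_of_wronskian_vanishing
    (c₁ c₂ : ℂ) (r₁ r₂ : ℝ) (hr₁ : 0 < r₁) (hr₂ : 0 < r₂)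
    (f g : ℂ → ℂ → ℂ)
    (hf : DifferentiableOn ℂ (fun p : ℂ × ℂ => f p.1 p.2)
      (Metric.ball c₁ r₁ ×ˢ Metric.ball c₂ r₂))
    (hg : DifferentiableOn ℂ (fun p : ℂ × ℂ => g p.1 p.2)
      (Metric.ball c₁ r₁ ×ˢ Metric.ball c₂ r₂))
    (hfz : ∀ z ∈ Metric.ball c₁ r₁, ∀ w ∈ Metric.ball c₂ r₂, pdz f z w ≠ 0)
    (hI0 : ∀ z ∈ Metric.ball c₁ r₁, ∀ w ∈ Metric.ball c₂ r₂,
      pdz f z w * pdzz g z w - pdz g z w * pdzz f z w = 0) :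
    ∃ lam mu : ℂ → ℂ,
      DifferentiableOn ℂ lam (Metric.ball c₂ r₂) ∧
      DifferentiableOn ℂ mu (Metric.ball c₂ r₂) ∧
      ∀ z ∈ Metric.ball c₁ r₁, ∀ w ∈ Metric.ball c₂ r₂,
        g z w = lam w * f z w + mu w :=
  affine_dependence_of_wronskian_vanishing_general c₁ c₂ r₁ r₂ hr₁ f g hf hg hfz hI0
end

section
/- Let D₁, D₂ ⊆ ℂ be open discs and f, g holomorphic functions on D₁ × D₂ satisfying, at every point of D₁ × D₂: f_z ≠ 0, the Jacobian f_w·g_z − g_w·f_z ≠ 0, and the two identities f_z·g_zz − g_z·f_zz = 0 and f_w·g_zz − g_w·f_zz + 2f_z·g_zw − 2g_z·f_zw = 0. Then every point (z₀,w₀) ∈ D₁ × D₂ has a neighborhood D₁' × D₂' ⊆ D₁ × D₂ on which there exist holomorphic functions α₀, α₁, α₂, β₀, β₁, β₂ : D₂' → ℂ such that α₀(w)z + β₀(w) ≠ 0 for all (z,w) ∈ D₁' × D₂', and f(z,w) = (α₁(w)z + β₁(w))/(α₀(w)z + β₀(w)) and g(z,w) = (α₂(w)z + β₂(w))/(α₀(w)z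 + β₀(w)) on D₁' × D₂'; that is, the map (f,g) is linear-fractional in the variable z. -/
/-- Partial derivative in the second variable: `F_w`. -/
noncomputable def pdw (F : ℂ → ℂ → ℂ) (z w : ℂ) : ℂ := deriv (fun w' => F z w') w

/-- Mixed second partial derivative: `F_zw` (the derivative of `F_z` in `w`). -/
noncomputable def pdzw (F : ℂ → ℂ → ℂ) (z w : ℂ) : ℂ := deriv (fun w' => pdz F z w') w

open Metric Set Filter Topology Function

section CauchyEstimates

variable {E : Type*} [NormedAddCommGroup E] [NormedSpace ℂ E]

theorem norm_deriv_le_of_norm_le_on_closedBall {V : Set ℂ} {f : ℂ → E}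
    (hf : DifferentiableOn ℂ f V) {w : ℂ} {r s M : ℝ} (hs : 0 < s)
    (hV : closedBall w (r + s) ⊆ V) (hM : ∀ v ∈ closedBall w (r + s), ‖f v‖ ≤ M)
    {v : ℂ} (hv : v ∈ closedBall w r) : ‖deriv f v‖ ≤ M / s := by
  have hsub : closedBall v s ⊆ closedBall w (r + s) :=
    closedBall_subset_closedBall' (by rw [mem_closedBall] at hv; linarith)
  exact Complex.norm_deriv_le_of_forall_mem_sphere_norm_le hs
    ((hf.mono hV).diffContOnCl_ball hsub) fun ζ hζ => hM ζ (hsub (sphere_subset_closedBall hζ))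

variable [CompleteSpace E]

theorem norm_slope_sub_deriv_le {V : Set ℂ} (hV : IsOpen V) {f : ℂ → E}
    (hf : DifferentiableOn ℂ f V) {w : ℂ} {r M : ℝ} (hr : 0 < r)
    (hsub : closedBall w r ⊆ V) (hM : ∀ v ∈ closedBall w r, ‖f v‖ ≤ M)
    {w' : ℂ} (hw' : w' ∈ closedBall w (r / 4)) (hne : w' ≠ w) :
    ‖slope f w w' - deriv f w‖ ≤ 8 * M / r ^ 2 * ‖w' - w‖ := by
  have hM0 : 0 ≤ M := (norm_nonneg _).trans (hM w (mem_closedBall_self hr.le))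
  rw [← add_halves r] at hsub hM
  have hnear : ∀ v ∈ closedBall w (r / 4), V ∈ 𝓝 v := fun v hv =>
    hV.mem_nhds (hsub (closedBall_subset_closedBall (by linarith) hv))
  have hderiv : ∀ v ∈ closedBall w (r / 4 + r / 4), ‖deriv f v‖ ≤ M / (r / 2) :=
    fun v hv => norm_deriv_le_of_norm_le_on_closedBall hf (half_pos hr) hsub hM
      (by rwa [show r / 4 + r / 4 = r / 2 by ring] at hv)
  have hderiv2 : ∀ v ∈ closedBall w (r / 4), ‖deriv (deriv f) v‖ ≤ 8 * M / r ^ 2 := by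
    intro v hv
    convert norm_deriv_le_of_norm_le_on_closedBall (hf.deriv hV) (by positivity)
      ((closedBall_subset_closedBall (by linarith)).trans hsub) hderiv hv using 1
    field_simp
    ring
  -- `f'` is Lipschitz near `w`; apply the mean value inequality to `v ↦ f v - v • f' w`.
  have hδ : closedBall w ‖w' - w‖ ⊆ closedBall w (r / 4) :=
    closedBall_subset_closedBall (by rwa [← dist_eq_norm, ← mem_closedBall])
  have hg : ∀ v ∈ closedBall w ‖w' - w‖,
      HasDerivAt (fun v => f v - v • deriv f w) (deriv f v - deriv f w) v := fun v hv => by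
    simpa using ((hf.differentiableAt (hnear v (hδ hv))).hasDerivAt).fun_sub
      ((hasDerivAt_id v).smul_const (deriv f w))
  have hlip : ∀ v ∈ closedBall w ‖w' - w‖,
      ‖deriv f v - deriv f w‖ ≤ 8 * M / r ^ 2 * ‖w' - w‖ := fun v hv =>
    ((convex_closedBall w (r / 4)).norm_image_sub_le_of_norm_deriv_le
      (fun u hu => ((hf.deriv hV).differentiableAt (hnear u hu))) hderiv2
      (mem_closedBall_self (by positivity)) (hδ hv)).trans
      (mul_le_mul_of_nonneg_left (by rwa [← dist_eq_norm, ← mem_closedBall]) (by positivity))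
  have hmv := (convex_closedBall w ‖w' - w‖).norm_image_sub_le_of_norm_hasDerivWithin_le
    (fun v hv => (hg v hv).hasDerivWithinAt) hlip (mem_closedBall_self (norm_nonneg _))
    (mem_closedBall.2 (by rw [dist_eq_norm]))
  have hsmul : f w' - w' • deriv f w - (f w - w • deriv f w)
      = (w' - w) • (slope f w w' - deriv f w) := by
    rw [smul_sub, sub_smul_slope, vsub_eq_sub, sub_smul]; abel
  rw [hsmul, norm_smul, mul_comm] at hmv
  exact le_of_mul_le_mul_right hmv (norm_pos_iff.2 (sub_ne_zero.2 hne))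

theorem tendstoLocallyUniformlyOn_slope {U V : Set ℂ} (hU : IsOpen U) (hV : IsOpen V)
    {F : ℂ → ℂ → E} (hFc : ContinuousOn (uncurry F) (U ×ˢ V))
    (hFw : ∀ z ∈ U, DifferentiableOn ℂ (F z) V) {w : ℂ} (hw : w ∈ V) :
    TendstoLocallyUniformlyOn (fun w' z => slope (F z) w w') (fun z => deriv (F z) w)
      (𝓝[≠] w) U := by
  rw [tendstoLocallyUniformlyOn_iff_forall_isCompact hU]
  intro K hKU hK
  obtain ⟨r, hr, hrV⟩ := nhds_basis_closedBall.mem_iff.1 (hV.mem_nhds hw)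
  obtain ⟨M, hM⟩ := (hK.prod (isCompact_closedBall w r)).exists_bound_of_continuousOn
    (hFc.mono (prod_mono hKU hrV))
  have hbound : ∀ᶠ w' in 𝓝[≠] w, ∀ z ∈ K,
      ‖slope (F z) w w' - deriv (F z) w‖ ≤ 8 * M / r ^ 2 * ‖w' - w‖ := by
    filter_upwards [self_mem_nhdsWithin,
      nhdsWithin_le_nhds (closedBall_mem_nhds w (by positivity : 0 < r / 4))]
      with w' hne hw' z hz
    exact norm_slope_sub_deriv_le hV (hFw z (hKU hz)) hr hrV
      (fun v hv => hM (z, v) ⟨hz, hv⟩) hw' hne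
  have hlim : Tendsto (fun w' => 8 * M / r ^ 2 * ‖w' - w‖) (𝓝[≠] w) (𝓝 0) :=
    tendsto_nhdsWithin_of_tendsto_nhds <|
      (by fun_prop : Continuous fun w' : ℂ => 8 * M / r ^ 2 * ‖w' - w‖).tendsto' w 0 (by simp)
  rw [tendstoUniformlyOn_iff]
  intro δ hδ
  filter_upwards [hbound, hlim.eventually (gt_mem_nhds hδ)] with w' hw' hsmall z hz
  rw [dist_eq_norm, norm_sub_rev]
  exact (hw' z hz).trans_lt hsmall

end CauchyEstimates

section MixedPartials

variable {U V : Set ℂ} {F : ℂ → ℂ → ℂ} {z w : ℂ}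

theorem differentiableOn_slice_fst
    (hF : DifferentiableOn ℂ (uncurry F) (U ×ˢ V)) (hw : w ∈ V) :
    DifferentiableOn ℂ (fun z => F z w) U :=
  hF.comp (differentiableOn_id.prodMk (differentiableOn_const w)) fun _ hz => ⟨hz, hw⟩

theorem differentiableOn_slice_snd
    (hF : DifferentiableOn ℂ (uncurry F) (U ×ˢ V)) (hz : z ∈ U) :
    DifferentiableOn ℂ (F z) V :=
  hF.comp ((differentiableOn_const z).prodMk differentiableOn_id) fun _ hw => ⟨hz, hw⟩

theorem hasDerivAt_pdz (hU : IsOpen U)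
    (hF : DifferentiableOn ℂ (uncurry F) (U ×ˢ V)) (hz : z ∈ U) (hw : w ∈ V) :
    HasDerivAt (fun z' => F z' w) (pdz F z w) z :=
  ((differentiableOn_slice_fst hF hw).differentiableAt (hU.mem_nhds hz)).hasDerivAt

theorem hasDerivAt_pdzz (hU : IsOpen U)
    (hF : DifferentiableOn ℂ (uncurry F) (U ×ˢ V)) (hz : z ∈ U) (hw : w ∈ V) :
    HasDerivAt (fun z' => pdz F z' w) (pdzz F z w) z :=
  (((differentiableOn_slice_fst hF hw).deriv hU).differentiableAt (hU.mem_nhds hz)).hasDerivAt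

theorem eventually_differentiableOn_slope_snd (hV : IsOpen V)
    (hF : DifferentiableOn ℂ (uncurry F) (U ×ˢ V)) (hw : w ∈ V) :
    ∀ᶠ w' in 𝓝[≠] w, DifferentiableOn ℂ (fun z => slope (F z) w w') U := by
  filter_upwards [nhdsWithin_le_nhds (hV.mem_nhds hw)] with w' hw'
  simp only [slope_def_module]
  exact ((differentiableOn_slice_fst hF hw').sub
    (differentiableOn_slice_fst hF hw)).const_smul (w' - w)⁻¹

theorem differentiableOn_pdw_fst (hU : IsOpen U) (hV : IsOpen V)
    (hF : DifferentiableOn ℂ (uncurry F) (U ×ˢ V)) (hw : w ∈ V) :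
    DifferentiableOn ℂ (fun z => pdw F z w) U :=
  (tendstoLocallyUniformlyOn_slope hU hV hF.continuousOn
    (fun _ hz => differentiableOn_slice_snd hF hz) hw).differentiableOn
    (eventually_differentiableOn_slope_snd hV hF hw) hU

-- The slopes of `pdz F z ·` at `w` are the `z`-derivatives of the `w`-difference quotients of
-- `F`, which converge to `∂_z (pdw F)` by Weierstrass' theorem.
theorem hasDerivAt_pdz_snd_deriv_pdw (hU : IsOpen U) (hV : IsOpen V)
    (hF : DifferentiableOn ℂ (uncurry F) (U ×ˢ V)) (hz : z ∈ U) (hw : w ∈ V) :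
    HasDerivAt (fun w' => pdz F z w') (deriv (fun z' => pdw F z' w) z) w := by
  have hlim := ((tendstoLocallyUniformlyOn_slope hU hV hF.continuousOn
    (fun _ hz => differentiableOn_slice_snd hF hz) hw).deriv
    (eventually_differentiableOn_slope_snd hV hF hw) hU).tendsto_at hz
  rw [hasDerivAt_iff_tendsto_slope]
  refine hlim.congr' ?_
  filter_upwards [nhdsWithin_le_nhds (hV.mem_nhds hw)] with w' hw'
  simp only [Function.comp_apply, slope_def_module]
  exact (((hasDerivAt_pdz hU hF hz hw').sub (hasDerivAt_pdz hU hF hz hw)).const_smul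
    (w' - w)⁻¹).deriv

theorem hasDerivAt_pdz_snd (hU : IsOpen U) (hV : IsOpen V)
    (hF : DifferentiableOn ℂ (uncurry F) (U ×ˢ V)) (hz : z ∈ U) (hw : w ∈ V) :
    HasDerivAt (fun w' => pdz F z w') (pdzw F z w) w := by
  have h := hasDerivAt_pdz_snd_deriv_pdw hU hV hF hz hw
  rwa [← h.deriv] at h

theorem hasDerivAt_pdw_fst (hU : IsOpen U) (hV : IsOpen V)
    (hF : DifferentiableOn ℂ (uncurry F) (U ×ˢ V)) (hz : z ∈ U) (hw : w ∈ V) :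
    HasDerivAt (fun z' => pdw F z' w) (pdzw F z w) z := by
  rw [pdzw, (hasDerivAt_pdz_snd_deriv_pdw hU hV hF hz hw).deriv]
  exact ((differentiableOn_pdw_fst hU hV hF hw).differentiableAt (hU.mem_nhds hz)).hasDerivAt

theorem differentiableOn_pdz_snd (hU : IsOpen U) (hV : IsOpen V)
    (hF : DifferentiableOn ℂ (uncurry F) (U ×ˢ V)) (hz : z ∈ U) :
    DifferentiableOn ℂ (fun w => pdz F z w) V := fun _ hw =>
  (hasDerivAt_pdz_snd hU hV hF hz hw).differentiableAt.differentiableWithinAt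

theorem differentiableOn_pdw_snd (hV : IsOpen V)
    (hF : DifferentiableOn ℂ (uncurry F) (U ×ˢ V)) (hz : z ∈ U) :
    DifferentiableOn ℂ (fun w => pdw F z w) V :=
  (differentiableOn_slice_snd hF hz).deriv hV

end MixedPartials

section OneVariable

variable {U : Set ℂ} {z₀ : ℂ}

theorem eq_of_hasDerivAt_eq_zero (hU : IsOpen U) (hU' : IsPreconnected U) {F : ℂ → ℂ}
    (hF : ∀ z ∈ U, HasDerivAt F 0 z) (hz₀ : z₀ ∈ U) : ∀ z ∈ U, F z = F z₀ := fun _ hz =>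
  hU.is_const_of_deriv_eq_zero hU'
    (fun x hx => (hF x hx).differentiableAt.differentiableWithinAt)
    (fun x hx => (hF x hx).deriv) hz hz₀

theorem eq_div_mul_of_wronskian_eq_zero (hU : IsOpen U) (hU' : IsPreconnected U)
    {φ ψ : ℂ → ℂ} (hφ : DifferentiableOn ℂ φ U) (hψ : DifferentiableOn ℂ ψ U)
    (hφ0 : ∀ z ∈ U, φ z ≠ 0) (hW : ∀ z ∈ U, φ z * deriv ψ z - ψ z * deriv φ z = 0)
    (hz₀ : z₀ ∈ U) : ∀ z ∈ U, ψ z = ψ z₀ / φ z₀ * φ z := by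
  have hquot : ∀ z ∈ U, HasDerivAt (fun z => ψ z / φ z) 0 z := fun z hz => by
    have hd := ((hψ.differentiableAt (hU.mem_nhds hz)).hasDerivAt).fun_div
      ((hφ.differentiableAt (hU.mem_nhds hz)).hasDerivAt) (hφ0 z hz)
    rwa [show deriv ψ z * φ z - ψ z * deriv φ z = 0 by linear_combination hW z hz,
      zero_div] at hd
  intro z hz
  rw [← eq_of_hasDerivAt_eq_zero hU hU' hquot hz₀ z hz, div_mul_cancel₀ _ (hφ0 z hz)]

theorem eq_div_sq_mul_sq_of_hasDerivAt {u P u' P' : ℂ → ℂ} (hU : IsOpen U)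
    (hU' : IsPreconnected U) (hu : ∀ z ∈ U, HasDerivAt u (u' z) z)
    (hP : ∀ z ∈ U, HasDerivAt P (P' z) z) (hP0 : ∀ z ∈ U, P z ≠ 0)
    (h : ∀ z ∈ U, u' z * P z = 2 * P' z * u z) (hz₀ : z₀ ∈ U) :
    ∀ z ∈ U, u z = u z₀ / P z₀ ^ 2 * P z ^ 2 := by
  have hquot : ∀ z ∈ U, HasDerivAt (fun z => u z / P z ^ 2) 0 z := fun z hz => by
    refine ((hu z hz).fun_div ((hP z hz).fun_pow 2) (pow_ne_zero 2 (hP0 z hz))).congr_deriv ?_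
    rw [div_eq_zero_iff]
    left
    linear_combination P z * h z hz
  intro z hz
  rw [← eq_of_hasDerivAt_eq_zero hU hU' hquot hz₀ z hz,
    div_mul_cancel₀ _ (pow_ne_zero 2 (hP0 z hz))]

theorem inv_eq_of_hasDerivAt_neg_mul_sq {P : ℂ → ℂ} {c : ℂ} (hU : IsOpen U)
    (hU' : IsPreconnected U) (hP : ∀ z ∈ U, HasDerivAt P (-(c * P z ^ 2)) z)
    (hP0 : ∀ z ∈ U, P z ≠ 0) (hz₀ : z₀ ∈ U) :
    ∀ z ∈ U, (P z)⁻¹ = (P z₀)⁻¹ + c * (z - z₀) := by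
  have hdiff : ∀ z ∈ U, HasDerivAt (fun z => (P z)⁻¹ - c * (z - z₀)) 0 z := fun z hz => by
    refine (((hP z hz).fun_inv (hP0 z hz)).fun_sub
      (((hasDerivAt_id z).sub_const z₀).const_mul c)).congr_deriv ?_
    field_simp [hP0 z hz]
    ring
  intro z hz
  linear_combination eq_of_hasDerivAt_eq_zero hU hU' hdiff hz₀ z hz

theorem eq_add_div_of_hasDerivAt_div_sq {φ : ℂ → ℂ} {b C : ℂ} (hU : IsOpen U)
    (hU' : IsPreconnected U) (hD : ∀ z ∈ U, 1 + b * (z - z₀) ≠ 0)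
    (hφ : ∀ z ∈ U, HasDerivAt φ (C / (1 + b * (z - z₀)) ^ 2) z) (hz₀ : z₀ ∈ U) :
    ∀ z ∈ U, φ z = φ z₀ + C * (z - z₀) / (1 + b * (z - z₀)) := by
  have hdiff : ∀ z ∈ U,
      HasDerivAt (fun z => φ z - C * (z - z₀) / (1 + b * (z - z₀))) 0 z := fun z hz => by
    have hlin : HasDerivAt (fun z => z - z₀) 1 z := (hasDerivAt_id z).sub_const z₀
    refine ((hφ z hz).fun_sub ((hlin.const_mul C).fun_div
      ((hlin.const_mul b).const_add 1) (hD z hz))).congr_deriv ?_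
    field_simp [hD z hz]
    ring
  intro z hz
  linear_combination eq_of_hasDerivAt_eq_zero hU hU' hdiff hz₀ z hz

theorem eq_linear_fractional_of_deriv_deriv_mul_eq {φ P : ℂ → ℂ} {k κ : ℂ}
    (hU : IsOpen U) (hU' : IsPreconnected U) (hφ : DifferentiableOn ℂ φ U)
    (hP : ∀ z ∈ U, HasDerivAt P (-k * deriv φ z) z) (hP0 : ∀ z ∈ U, P z ≠ 0)
    (hφP : ∀ z ∈ U, deriv (deriv φ) z * P z = -2 * k * deriv φ z ^ 2) (hz₀ : z₀ ∈ U)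
    (hκ : κ = k * deriv φ z₀ / P z₀) :
    ∀ z ∈ U, 1 + κ * (z - z₀) ≠ 0 ∧
      φ z = φ z₀ + deriv φ z₀ * (z - z₀) / (1 + κ * (z - z₀)) := by
  have hφ' : ∀ z ∈ U, HasDerivAt (deriv φ) (deriv (deriv φ) z) z := fun z hz =>
    ((hφ.deriv hU).differentiableAt (hU.mem_nhds hz)).hasDerivAt
  set C := deriv φ z₀ / P z₀ ^ 2 with hC
  have hsq : ∀ z ∈ U, deriv φ z = C * P z ^ 2 :=
    eq_div_sq_mul_sq_of_hasDerivAt hU hU' hφ' hP hP0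
      (fun z hz => by linear_combination hφP z hz) hz₀
  have hinv : ∀ z ∈ U, (P z)⁻¹ = (P z₀)⁻¹ + k * C * (z - z₀) :=
    inv_eq_of_hasDerivAt_neg_mul_sq hU hU' (fun z hz => by
      simpa [hsq z hz, mul_assoc] using hP z hz) hP0 hz₀
  have hratio : ∀ z ∈ U, P z₀ / P z = 1 + κ * (z - z₀) := fun z hz => by
    rw [div_eq_mul_inv, hinv z hz, hκ, hC]
    field_simp [hP0 z₀ hz₀]
  have hD : ∀ z ∈ U, 1 + κ * (z - z₀) ≠ 0 := fun z hz => by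
    rw [← hratio z hz]; exact div_ne_zero (hP0 z₀ hz₀) (hP0 z hz)
  refine fun z hz => ⟨hD z hz, eq_add_div_of_hasDerivAt_div_sq hU hU' hD (fun z hz => ?_) hz₀ z hz⟩
  rw [← hratio z hz, div_pow, div_div_eq_mul_div, mul_div_right_comm, ← hC, ← hsq z hz]
  exact (hφ.differentiableAt (hU.mem_nhds hz)).hasDerivAt

theorem eq_mul_add_of_deriv_eq_mul {φ ψ : ℂ → ℂ} {c : ℂ} (hU : IsOpen U)
    (hU' : IsPreconnected U) (hφ : DifferentiableOn ℂ φ U) (hψ : DifferentiableOn ℂ ψ U)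
    (hderiv : ∀ z ∈ U, deriv ψ z = c * deriv φ z) (hz₀ : z₀ ∈ U) :
    ∀ z ∈ U, ψ z = c * φ z + (ψ z₀ - c * φ z₀) := by
  have hdiff : ∀ z ∈ U, HasDerivAt (fun z => ψ z - c * φ z) 0 z := fun z hz => by
    refine (((hψ.differentiableAt (hU.mem_nhds hz)).hasDerivAt).fun_sub
      (((hφ.differentiableAt (hU.mem_nhds hz)).hasDerivAt).const_mul c)).congr_deriv ?_
    rw [hderiv z hz, sub_self]
  intro z hz
  linear_combination eq_of_hasDerivAt_eq_zero hU hU' hdiff hz₀ z hz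

end OneVariable

section LinearFractional

variable {U V : Set ℂ} {f g : ℂ → ℂ → ℂ} {z₀ w : ℂ}

theorem pdz_eq_div_mul_pdz (hU : IsOpen U) (hU' : IsPreconnected U)
    (hf : DifferentiableOn ℂ (uncurry f) (U ×ˢ V))
    (hg : DifferentiableOn ℂ (uncurry g) (U ×ˢ V))
    (hfz : ∀ z ∈ U, ∀ w ∈ V, pdz f z w ≠ 0)
    (hI0 : ∀ z ∈ U, ∀ w ∈ V, pdz f z w * pdzz g z w - pdz g z w * pdzz f z w = 0)
    (hz₀ : z₀ ∈ U) :
    ∀ z ∈ U, ∀ w ∈ V, pdz g z w = pdz g z₀ w / pdz f z₀ w * pdz f z w :=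
  fun z hz w hw => eq_div_mul_of_wronskian_eq_zero hU hU'
    ((differentiableOn_slice_fst hf hw).deriv hU) ((differentiableOn_slice_fst hg hw).deriv hU)
    (fun z hz => hfz z hz w hw) (fun z hz => hI0 z hz w hw) hz₀ z hz

theorem mul_pdw_sub_pdw_ne_zero {z c : ℂ}
    (hJac : pdw f z w * pdz g z w - pdw g z w * pdz f z w ≠ 0)
    (hc : pdz g z w = c * pdz f z w) : c * pdw f z w - pdw g z w ≠ 0 := by
  refine right_ne_zero_of_mul (a := pdz f z w) ?_
  rwa [hc, show pdw f z w * (c * pdz f z w) - pdw g z w * pdz f z w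
    = pdz f z w * (c * pdw f z w - pdw g z w) by ring] at hJac

theorem eq_linear_fractional_of_I1_eq_zero {h : ℂ → ℂ} {κ : ℂ} (hU : IsOpen U)
    (hU' : IsPreconnected U) (hV : IsOpen V)
    (hf : DifferentiableOn ℂ (uncurry f) (U ×ˢ V))
    (hg : DifferentiableOn ℂ (uncurry g) (U ×ˢ V))
    (hJac : ∀ z ∈ U, ∀ w ∈ V, pdw f z w * pdz g z w - pdw g z w * pdz f z w ≠ 0)
    (hI1 : ∀ z ∈ U, ∀ w ∈ V, pdw f z w * pdzz g z w - pdw g z w * pdzz f z w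
        + 2 * pdz f z w * pdzw g z w - 2 * pdz g z w * pdzw f z w = 0)
    (hh : ∀ z ∈ U, ∀ w ∈ V, pdz g z w = h w * pdz f z w) (hhw : DifferentiableAt ℂ h w)
    (hz₀ : z₀ ∈ U) (hw : w ∈ V)
    (hκ : κ = deriv h w * pdz f z₀ w / (h w * pdw f z₀ w - pdw g z₀ w)) :
    ∀ z ∈ U, 1 + κ * (z - z₀) ≠ 0 ∧
      f z w = f z₀ w + pdz f z₀ w * (z - z₀) / (1 + κ * (z - z₀)) ∧
      g z w = h w * f z w + (g z₀ w - h w * f z₀ w) := by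
  have hzz : ∀ z ∈ U, pdzz g z w = h w * pdzz f z w := fun z hz =>
    (((hasDerivAt_pdzz hU hf hz hw).const_mul (h w)).congr_of_eventuallyEq
      (eventually_of_mem (hU.mem_nhds hz) fun z' hz' => hh z' hz' w hw)).deriv
  have hzw : ∀ z ∈ U, pdzw g z w = deriv h w * pdz f z w + h w * pdzw f z w := fun z hz =>
    ((hhw.hasDerivAt.mul (hasDerivAt_pdz_snd hU hV hf hz hw)).congr_of_eventuallyEq
      (eventually_of_mem (hV.mem_nhds hw) fun w' hw' => hh z hz w' hw')).deriv
  -- `P = J / f_z`; its `z`-derivative is `-h' f_z` by the symmetry of mixed partials.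
  set P : ℂ → ℂ := fun z => h w * pdw f z w - pdw g z w
  have hP : ∀ z ∈ U, HasDerivAt P (-deriv h w * pdz f z w) z := fun z hz =>
    (((hasDerivAt_pdw_fst hU hV hf hz hw).const_mul (h w)).fun_sub
      (hasDerivAt_pdw_fst hU hV hg hz hw)).congr_deriv (by rw [hzw z hz]; ring)
  have hP0 : ∀ z ∈ U, P z ≠ 0 := fun z hz =>
    mul_pdw_sub_pdw_ne_zero (hJac z hz w hw) (hh z hz w hw)
  have hI1' : ∀ z ∈ U, pdzz f z w * P z = -2 * deriv h w * pdz f z w ^ 2 := fun z hz => by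
    have := hI1 z hz w hw
    rw [hzz z hz, hzw z hz, hh z hz w hw] at this
    linear_combination this
  intro z hz
  obtain ⟨hD, hfeq⟩ := eq_linear_fractional_of_deriv_deriv_mul_eq (φ := fun z => f z w) hU hU'
    (differentiableOn_slice_fst hf hw) hP hP0 hI1' hz₀ hκ z hz
  exact ⟨hD, hfeq, eq_mul_add_of_deriv_eq_mul hU hU' (differentiableOn_slice_fst hf hw)
    (differentiableOn_slice_fst hg hw) (fun z hz => hh z hz w hw) hz₀ z hz⟩

end LinearFractional

theorem linear_div_linear_of_eq_add_div {x y A B c d κ z z₀ : ℂ}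
    (hD : 1 + κ * (z - z₀) ≠ 0) (hx : x = A + B * (z - z₀) / (1 + κ * (z - z₀)))
    (hy : y = c * x + d) :
    κ * z + (1 - κ * z₀) ≠ 0 ∧
      x = ((A * κ + B) * z + (A * (1 - κ * z₀) - B * z₀)) / (κ * z + (1 - κ * z₀)) ∧
      y = ((c * (A * κ + B) + d * κ) * z + (c * (A * (1 - κ * z₀) - B * z₀)
        + d * (1 - κ * z₀))) / (κ * z + (1 - κ * z₀)) := by
  rw [show 1 + κ * (z - z₀) = κ * z + (1 - κ * z₀) by ring] at hD hx
  subst hy hx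
  generalize hE : κ * z + (1 - κ * z₀) = E at hD ⊢
  refine ⟨hD, ?_, ?_⟩ <;> field_simp <;> rw [← hE] <;> ring

theorem linear_fractional_in_z_of_I0_I1_vanishing_general
    (c₁ c₂ : ℂ) (r₁ r₂ : ℝ)
    (f g : ℂ → ℂ → ℂ)
    (hf : DifferentiableOn ℂ (fun p : ℂ × ℂ => f p.1 p.2)
      (Metric.ball c₁ r₁ ×ˢ Metric.ball c₂ r₂))
    (hg : DifferentiableOn ℂ (fun p : ℂ × ℂ => g p.1 p.2)
      (Metric.ball c₁ r₁ ×ˢ Metric.ball c₂ r₂))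
    (hfz : ∀ z ∈ Metric.ball c₁ r₁, ∀ w ∈ Metric.ball c₂ r₂, pdz f z w ≠ 0)
    (hJac : ∀ z ∈ Metric.ball c₁ r₁, ∀ w ∈ Metric.ball c₂ r₂,
      pdw f z w * pdz g z w - pdw g z w * pdz f z w ≠ 0)
    (hI0 : ∀ z ∈ Metric.ball c₁ r₁, ∀ w ∈ Metric.ball c₂ r₂,
      pdz f z w * pdzz g z w - pdz g z w * pdzz f z w = 0)
    (hI1 : ∀ z ∈ Metric.ball c₁ r₁, ∀ w ∈ Metric.ball c₂ r₂,
      pdw f z w * pdzz g z w - pdw g z w * pdzz f z w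
        + 2 * pdz f z w * pdzw g z w - 2 * pdz g z w * pdzw f z w = 0) :
    ∀ z₀ ∈ Metric.ball c₁ r₁, ∀ w₀ ∈ Metric.ball c₂ r₂,
      ∃ ρ₁ ρ₂ : ℝ, 0 < ρ₁ ∧ 0 < ρ₂ ∧
        Metric.ball z₀ ρ₁ ⊆ Metric.ball c₁ r₁ ∧
        Metric.ball w₀ ρ₂ ⊆ Metric.ball c₂ r₂ ∧
        ∃ α₀ α₁ α₂ β₀ β₁ β₂ : ℂ → ℂ,
          DifferentiableOn ℂ α₀ (Metric.ball w₀ ρ₂) ∧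
          DifferentiableOn ℂ α₁ (Metric.ball w₀ ρ₂) ∧
          DifferentiableOn ℂ α₂ (Metric.ball w₀ ρ₂) ∧
          DifferentiableOn ℂ β₀ (Metric.ball w₀ ρ₂) ∧
          DifferentiableOn ℂ β₁ (Metric.ball w₀ ρ₂) ∧
          DifferentiableOn ℂ β₂ (Metric.ball w₀ ρ₂) ∧
          ∀ z ∈ Metric.ball z₀ ρ₁, ∀ w ∈ Metric.ball w₀ ρ₂,
            α₀ w * z + β₀ w ≠ 0 ∧
            f z w = (α₁ w * z + β₁ w) / (α₀ w * z + β₀ w) ∧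
            g z w = (α₂ w * z + β₂ w) / (α₀ w * z + β₀ w) := by
  intro z₀ hz₀ w₀ hw₀
  obtain ⟨ρ₁, hρ₁, hsub₁⟩ := isOpen_iff.1 isOpen_ball z₀ hz₀
  obtain ⟨ρ₂, hρ₂, hsub₂⟩ := isOpen_iff.1 isOpen_ball w₀ hw₀
  have hU' := (convex_ball c₁ r₁).isPreconnected
  have hh := pdz_eq_div_mul_pdz isOpen_ball hU' hf hg hfz hI0 hz₀
  set h : ℂ → ℂ := fun w => pdz g z₀ w / pdz f z₀ w
  -- `κ = -f_zz / (2 f_z)` at `(z₀, w)`, written in a form that is visibly holomorphic in `w`.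
  set κ : ℂ → ℂ := fun w => deriv h w * pdz f z₀ w / (h w * pdw f z₀ w - pdw g z₀ w)
  have hdf := differentiableOn_slice_snd hf hz₀
  have hdg := differentiableOn_slice_snd hg hz₀
  have hdfz := differentiableOn_pdz_snd isOpen_ball isOpen_ball hf hz₀
  have hdh : DifferentiableOn ℂ h (ball c₂ r₂) :=
    (differentiableOn_pdz_snd isOpen_ball isOpen_ball hg hz₀).div hdfz (hfz z₀ hz₀)
  have hdκ : DifferentiableOn ℂ κ (ball c₂ r₂) :=
    ((hdh.deriv isOpen_ball).mul hdfz).div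
      ((hdh.mul (differentiableOn_pdw_snd isOpen_ball hf hz₀)).sub
        (differentiableOn_pdw_snd isOpen_ball hg hz₀))
      fun w hw => mul_pdw_sub_pdw_ne_zero (hJac z₀ hz₀ w hw) (hh z₀ hz₀ w hw)
  refine ⟨ρ₁, ρ₂, hρ₁, hρ₂, hsub₁, hsub₂, κ, fun w => f z₀ w * κ w + pdz f z₀ w,
    fun w => h w * (f z₀ w * κ w + pdz f z₀ w) + (g z₀ w - h w * f z₀ w) * κ w,
    fun w => 1 - κ w * z₀, fun w => f z₀ w * (1 - κ w * z₀) - pdz f z₀ w * z₀,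
    fun w => h w * (f z₀ w * (1 - κ w * z₀) - pdz f z₀ w * z₀)
      + (g z₀ w - h w * f z₀ w) * (1 - κ w * z₀), ?_, ?_, ?_, ?_, ?_, ?_, fun z hz w hw => ?_⟩
  iterate 6 exact DifferentiableOn.mono (by fun_prop) hsub₂
  obtain ⟨hD, hfeq, hgeq⟩ := eq_linear_fractional_of_I1_eq_zero isOpen_ball hU' isOpen_ball hf hg
    hJac hI1 hh (hdh.differentiableAt (isOpen_ball.mem_nhds (hsub₂ hw))) hz₀ (hsub₂ hw) rfl z
    (hsub₁ hz)
  exact linear_div_linear_of_eq_add_div hD hfeq hgeq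

/-- **Vanishing of `I₀` and `I₁` forces the map `(f,g)` to be linear-fractional in `z`.**
Let `f, g` be holomorphic on a product of discs `D₁ × D₂` with `f_z ≠ 0`, nonvanishing
Jacobian `f_w·g_z − g_w·f_z ≠ 0`, and suppose `f_z·g_zz − g_z·f_zz = 0` and
`f_w·g_zz − g_w·f_zz + 2f_z·g_zw − 2g_z·f_zw = 0` everywhere. Then near every point of
`D₁ × D₂` both `f` and `g` are linear-fractional in `z` with holomorphic-in-`w`
coefficients and a common denominator. -/
theorem linear_fractional_in_z_of_I0_I1_vanishing
    (c₁ c₂ : ℂ) (r₁ r₂ : ℝ) (hr₁ : 0 < r₁) (hr₂ : 0 < r₂)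
    (f g : ℂ → ℂ → ℂ)
    (hf : DifferentiableOn ℂ (fun p : ℂ × ℂ => f p.1 p.2)
      (Metric.ball c₁ r₁ ×ˢ Metric.ball c₂ r₂))
    (hg : DifferentiableOn ℂ (fun p : ℂ × ℂ => g p.1 p.2)
      (Metric.ball c₁ r₁ ×ˢ Metric.ball c₂ r₂))
    (hfz : ∀ z ∈ Metric.ball c₁ r₁, ∀ w ∈ Metric.ball c₂ r₂, pdz f z w ≠ 0)
    (hJac : ∀ z ∈ Metric.ball c₁ r₁, ∀ w ∈ Metric.ball c₂ r₂,
      pdw f z w * pdz g z w - pdw g z w * pdz f z w ≠ 0)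
    (hI0 : ∀ z ∈ Metric.ball c₁ r₁, ∀ w ∈ Metric.ball c₂ r₂,
      pdz f z w * pdzz g z w - pdz g z w * pdzz f z w = 0)
    (hI1 : ∀ z ∈ Metric.ball c₁ r₁, ∀ w ∈ Metric.ball c₂ r₂,
      pdw f z w * pdzz g z w - pdw g z w * pdzz f z w
        + 2 * pdz f z w * pdzw g z w - 2 * pdz g z w * pdzw f z w = 0) :
    ∀ z₀ ∈ Metric.ball c₁ r₁, ∀ w₀ ∈ Metric.ball c₂ r₂,
      ∃ ρ₁ ρ₂ : ℝ, 0 < ρ₁ ∧ 0 < ρ₂ ∧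
        Metric.ball z₀ ρ₁ ⊆ Metric.ball c₁ r₁ ∧
        Metric.ball w₀ ρ₂ ⊆ Metric.ball c₂ r₂ ∧
        ∃ α₀ α₁ α₂ β₀ β₁ β₂ : ℂ → ℂ,
          DifferentiableOn ℂ α₀ (Metric.ball w₀ ρ₂) ∧
          DifferentiableOn ℂ α₁ (Metric.ball w₀ ρ₂) ∧
          DifferentiableOn ℂ α₂ (Metric.ball w₀ ρ₂) ∧
          DifferentiableOn ℂ β₀ (Metric.ball w₀ ρ₂) ∧
          DifferentiableOn ℂ β₁ (Metric.ball w₀ ρ₂) ∧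
          DifferentiableOn ℂ β₂ (Metric.ball w₀ ρ₂) ∧
          ∀ z ∈ Metric.ball z₀ ρ₁, ∀ w ∈ Metric.ball w₀ ρ₂,
            α₀ w * z + β₀ w ≠ 0 ∧
            f z w = (α₁ w * z + β₁ w) / (α₀ w * z + β₀ w) ∧
            g z w = (α₂ w * z + β₂ w) / (α₀ w * z + β₀ w) :=
  linear_fractional_in_z_of_I0_I1_vanishing_general c₁ c₂ r₁ r₂ f g hf hg hfz hJac hI0 hI1
end

section
/- Let ε > 0 and let α, a, δ be holomorphic functions on the punctured disc {w ∈ ℂ : 0 < |w| < ε} such that W := α'·a − a'·α is not identically zero. Suppose there exist r, ε' > 0 and holomorphic functions P̃, Q̃ on the full polydisc {(z,w) : |z| < r, |w| < ε'} such that P̃(z,w) = a(w)·(z + δ(w))/W(w) and Q̃(z,w) = α(w)·(z + δ(w))/W(w) whenever |z| < r and 0 < |w| < ε'. Then α, a, and δ each extend meromorphically across w = 0. -/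
/-- `f`, holomorphic on a punctured disc around `0`, extends meromorphically across `0`:
`f(w) = wⁿ·v(w)` for some integer `n` and some holomorphic `v` on a full disc around `0`. -/
def ExtendsMeromorphically (f : ℂ → ℂ) : Prop :=
  ∃ ρ : ℝ, 0 < ρ ∧ ∃ n : ℤ, ∃ v : ℂ → ℂ,
    DifferentiableOn ℂ v {w : ℂ | ‖w‖ < ρ} ∧
    ∀ w : ℂ, 0 < ‖w‖ → ‖w‖ < ρ → f w = w ^ n * v w

/-!
Comparing `P̃` and `Q̃` at two values of `z` shows that `A = a/W`, `B = α/W` and `C = aδ/W` are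
holomorphic across `w = 0`. By the quotient rule `E := B'A - A'B = W/W² = 1/W` wherever `W ≠ 0`.
As `W` is not identically zero on the connected punctured disc its zeros are isolated, and the
holomorphic `E` cannot satisfy `E·W = 1` around a zero of `W`; so `W` has no zeros at all. Hence
`α = B/E`, `a = A/E` and `δ = C/A` are quotients of holomorphic germs at `0` (`A` is not
identically zero near `0`, for otherwise `E` would be).
-/

open Filter Topology Set Metric

section Wronskian

variable {𝕜 : Type*} [NontriviallyNormedField 𝕜]

noncomputable def wronskian (f g : 𝕜 → 𝕜) (x : 𝕜) : 𝕜 := deriv f x * g x - deriv g x * f x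

theorem Filter.EventuallyEq.wronskian_eq {f₁ f₂ g₁ g₂ : 𝕜 → 𝕜} {x : 𝕜} (hf : f₁ =ᶠ[𝓝 x] f₂)
    (hg : g₁ =ᶠ[𝓝 x] g₂) : wronskian f₁ g₁ x = wronskian f₂ g₂ x := by
  simp only [wronskian, hf.deriv_eq, hg.deriv_eq, hf.eq_of_nhds, hg.eq_of_nhds]

theorem wronskian_div_div {f g h : 𝕜 → 𝕜} {x : 𝕜} (hf : DifferentiableAt 𝕜 f x)
    (hg : DifferentiableAt 𝕜 g x) (hh : DifferentiableAt 𝕜 h x) (hx : h x ≠ 0) :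
    wronskian (fun y ↦ f y / h y) (fun y ↦ g y / h y) x = wronskian f g x / h x ^ 2 := by
  simp only [wronskian, deriv_fun_div hf hh hx, deriv_fun_div hg hh hx]
  field_simp
  ring

theorem wronskian_eventuallyEq_zero {f g : 𝕜 → 𝕜} {x : 𝕜} (hg : g =ᶠ[𝓝 x] 0) :
    wronskian f g =ᶠ[𝓝 x] 0 := by
  filter_upwards [hg.eventuallyEq_nhds] with y hy
  simp [wronskian, hy.deriv_eq, hy.eq_of_nhds]

theorem AnalyticAt.wronskian [CompleteSpace 𝕜] {f g : 𝕜 → 𝕜} {x : 𝕜} (hf : AnalyticAt 𝕜 f x)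
    (hg : AnalyticAt 𝕜 g x) : AnalyticAt 𝕜 (wronskian f g) x :=
  (hf.deriv.mul hg).sub (hg.deriv.mul hf)

theorem AnalyticAt.eventually_ne_zero_of_frequently_wronskian_ne_zero {f g : 𝕜 → 𝕜} {x : 𝕜}
    (hg : AnalyticAt 𝕜 g x) (hW : ∃ᶠ y in 𝓝[≠] x, _root_.wronskian f g y ≠ 0) :
    ∀ᶠ y in 𝓝[≠] x, g y ≠ 0 :=
  hg.eventually_eq_zero_or_eventually_ne_zero.resolve_left fun h ↦
    hW (((wronskian_eventuallyEq_zero (f := f) h).filter_mono nhdsWithin_le_nhds).mono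
      fun _ hy hne ↦ hne hy)

end Wronskian

theorem AnalyticOnNhd.apply_ne_zero_of_mul_eq_one {𝕜 : Type*} [NontriviallyNormedField 𝕜]
    {f g : 𝕜 → 𝕜} {U : Set 𝕜} (hf : AnalyticOnNhd 𝕜 f U) (hU : IsPreconnected U) {z₀ : 𝕜}
    (hz₀ : z₀ ∈ U) (hfz₀ : f z₀ ≠ 0) {z : 𝕜} (hz : z ∈ U) (hg : ContinuousAt g z)
    (hfg : ∀ᶠ y in 𝓝[≠] z, f y ≠ 0 → g y * f y = 1) : f z ≠ 0 := by
  intro hfz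
  rcases (hf z hz).eventually_eq_zero_or_eventually_ne_zero with hzero | hne
  · exact hfz₀ (hf.eqOn_zero_of_preconnected_of_eventuallyEq_zero hU hz hzero hz₀)
  · have hlim : Tendsto (fun y ↦ g y * f y) (𝓝[≠] z) (𝓝 (g z * f z)) :=
      (hg.mul (hf z hz).continuousAt).tendsto.mono_left nhdsWithin_le_nhds
    have hone : Tendsto (fun y ↦ g y * f y) (𝓝[≠] z) (𝓝 1) :=
      tendsto_const_nhds.congr' (by filter_upwards [hne, hfg] with y h₁ h₂ using (h₂ h₁).symm)
    rw [hfz, mul_zero] at hlim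
    exact one_ne_zero (tendsto_nhds_unique hone hlim)

theorem isOpen_punctured_disc (ε : ℝ) : IsOpen {w : ℂ | 0 < ‖w‖ ∧ ‖w‖ < ε} :=
  (isOpen_lt continuous_const continuous_norm).inter (isOpen_lt continuous_norm continuous_const)

theorem isPreconnected_punctured_disc (ε : ℝ) :
    IsPreconnected {w : ℂ | 0 < ‖w‖ ∧ ‖w‖ < ε} := by
  rcases le_or_gt ε 0 with hε | hε
  · convert isPreconnected_empty
    exact eq_empty_of_forall_notMem fun w hw ↦ (hw.1.trans hw.2).not_ge hε
  have hexp : {w : ℂ | 0 < ‖w‖ ∧ ‖w‖ < ε} = Complex.exp '' {z | z.re < Real.log ε} := by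
    ext w
    constructor
    · rintro ⟨hw₀, hwε⟩
      refine ⟨Complex.log w, ?_, Complex.exp_log (norm_pos_iff.mp hw₀)⟩
      simpa [Complex.log_re] using Real.log_lt_log hw₀ hwε
    · rintro ⟨z, hz, rfl⟩
      show 0 < ‖Complex.exp z‖ ∧ ‖Complex.exp z‖ < ε
      rw [Complex.norm_exp]
      exact ⟨Real.exp_pos _, (Real.lt_log_iff_exp_lt hε).mp hz⟩
  rw [hexp]
  exact (convex_halfSpace_re_lt _).isPreconnected.image _ Complex.continuous_exp.continuousOn

theorem punctured_disc_mem_nhdsNE {ε : ℝ} (hε : 0 < ε) :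
    {w : ℂ | 0 < ‖w‖ ∧ ‖w‖ < ε} ∈ 𝓝[≠] 0 := by
  filter_upwards [self_mem_nhdsWithin, mem_nhdsWithin_of_mem_nhds (ball_mem_nhds 0 hε)]
    with w hw hwε
  exact ⟨norm_pos_iff.mpr hw, mem_ball_zero_iff.mp hwε⟩

theorem MeromorphicAt.extendsMeromorphically {f : ℂ → ℂ} (hf : MeromorphicAt f 0) :
    ExtendsMeromorphically f := by
  obtain ⟨n, hn⟩ := hf
  obtain ⟨ρ, hρ, hv⟩ := hn.exists_ball_analyticOnNhd
  refine ⟨ρ, hρ, -n, fun z ↦ (z - 0) ^ n • f z, ?_, fun w hw _ ↦ ?_⟩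
  · simpa [ball, dist_zero_right] using hv.differentiableOn
  · simp only [zpow_neg, zpow_natCast, sub_zero, smul_eq_mul,
      inv_mul_cancel_left₀ (pow_ne_zero n (norm_pos_iff.mp hw))]

theorem extendsMeromorphically_of_eventually_eq_div {f g h : ℂ → ℂ} (hg : AnalyticAt ℂ g 0)
    (hh : AnalyticAt ℂ h 0) (hf : ∀ᶠ w in 𝓝[≠] 0, g w / h w = f w) :
    ExtendsMeromorphically f :=
  ((hg.meromorphicAt.div hh.meromorphicAt).congr hf).extendsMeromorphically

theorem exists_slope_intercept_of_eq_affine {F : ℂ × ℂ → ℂ} {r ρ : ℝ} (hr : 0 < r)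
    (hF : DifferentiableOn ℂ F {p : ℂ × ℂ | ‖p.1‖ < r ∧ ‖p.2‖ < ρ}) {c d : ℂ → ℂ} {T : Set ℂ}
    (heq : ∀ z : ℂ, ‖z‖ < r → ∀ w ∈ T, F (z, w) = c w * z + d w) :
    ∃ s t : ℂ → ℂ, DifferentiableOn ℂ s (ball 0 ρ) ∧ DifferentiableOn ℂ t (ball 0 ρ) ∧
      ∀ w ∈ T, s w = c w ∧ t w = d w := by
  set z₀ : ℂ := ((r / 2 : ℝ) : ℂ)
  have hz₀ : ‖z₀‖ < r := by
    rw [Complex.norm_real, Real.norm_of_nonneg (by positivity)]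
    linarith
  have hz₀0 : z₀ ≠ 0 := Complex.ofReal_ne_zero.mpr (by positivity)
  have h0 : ‖(0 : ℂ)‖ < r := by simpa using hr
  have hslice : ∀ z : ℂ, ‖z‖ < r → DifferentiableOn ℂ (fun w ↦ F (z, w)) (ball 0 ρ) :=
    fun z hz ↦ hF.comp ((differentiableOn_const z).prodMk differentiableOn_id)
      fun w hw ↦ ⟨hz, mem_ball_zero_iff.mp hw⟩
  refine ⟨fun w ↦ (F (z₀, w) - F (0, w)) / z₀, fun w ↦ F (0, w),
    ((hslice z₀ hz₀).sub (hslice 0 h0)).div_const z₀, hslice 0 h0, fun w hw ↦ ⟨?_, ?_⟩⟩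
  · simp only [heq z₀ hz₀ w hw, heq 0 h0 w hw]
    field_simp
    ring
  · simp [heq 0 h0 w hw]

theorem wronskian_mul_wronskian_eq_one {α a A B : ℂ → ℂ} {U V : Set ℂ} (hU : IsOpen U)
    (hUc : IsPreconnected U) (hα : DifferentiableOn ℂ α U) (ha : DifferentiableOn ℂ a U)
    (hW : ∃ w ∈ U, wronskian α a w ≠ 0) (hV : IsOpen V) (hA : DifferentiableOn ℂ A V)
    (hB : DifferentiableOn ℂ B V) (hAa : ∀ w ∈ U ∩ V, A w = a w / wronskian α a w)
    (hBα : ∀ w ∈ U ∩ V, B w = α w / wronskian α a w) :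
    ∀ w ∈ U ∩ V, wronskian B A w * wronskian α a w = 1 := by
  obtain ⟨w₀, hw₀, hW₀⟩ := hW
  have hUV : IsOpen (U ∩ V) := hU.inter hV
  have hWan : AnalyticOnNhd ℂ (wronskian α a) U := fun w hw ↦
    (hα.analyticOnNhd hU w hw).wronskian (ha.analyticOnNhd hU w hw)
  have hEW : ∀ w ∈ U ∩ V, wronskian α a w ≠ 0 → wronskian B A w * wronskian α a w = 1 := by
    intro w hw hWw
    have hAeq : A =ᶠ[𝓝 w] fun y ↦ a y / wronskian α a y :=
      eventually_of_mem (hUV.mem_nhds hw) hAa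
    have hBeq : B =ᶠ[𝓝 w] fun y ↦ α y / wronskian α a y :=
      eventually_of_mem (hUV.mem_nhds hw) hBα
    rw [hBeq.wronskian_eq hAeq, wronskian_div_div (hα.differentiableAt (hU.mem_nhds hw.1))
      (ha.differentiableAt (hU.mem_nhds hw.1)) (hWan w hw.1).differentiableAt hWw]
    field_simp
  intro w hw
  have hE : ContinuousAt (wronskian B A) w :=
    ((hB.analyticOnNhd hV w hw.2).wronskian (hA.analyticOnNhd hV w hw.2)).continuousAt
  refine hEW w hw (hWan.apply_ne_zero_of_mul_eq_one hUc hw₀ hW₀ hw.1 hE ?_)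
  filter_upwards [mem_nhdsWithin_of_mem_nhds (hUV.mem_nhds hw)] with y hy using hEW y hy

theorem div_eq_of_eq_div_of_mul_eq_one {K : Type*} [Field K] {x y e v : K} (hx : x = y / v)
    (h : e * v = 1) : x / e = y := by
  rw [hx, eq_inv_of_mul_eq_one_left h, div_inv_eq_mul,
    div_mul_cancel₀ _ (right_ne_zero_of_mul_eq_one h)]

theorem extendsMeromorphically_of_wronskian_mul_eq_one {α a δ A B C W : ℂ → ℂ} (hA : AnalyticAt ℂ A 0)
    (hB : AnalyticAt ℂ B 0) (hC : AnalyticAt ℂ C 0)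
    (h : ∀ᶠ w in 𝓝[≠] 0, wronskian B A w * W w = 1 ∧ A w = a w / W w ∧ B w = α w / W w ∧
      C w = A w * δ w) :
    ExtendsMeromorphically α ∧ ExtendsMeromorphically a ∧ ExtendsMeromorphically δ := by
  have hA0 : ∀ᶠ w in 𝓝[≠] 0, A w ≠ 0 := hA.eventually_ne_zero_of_frequently_wronskian_ne_zero
    (h.mono fun _ hw ↦ left_ne_zero_of_mul_eq_one hw.1).frequently
  refine ⟨extendsMeromorphically_of_eventually_eq_div hB (hB.wronskian hA) ?_,
    extendsMeromorphically_of_eventually_eq_div hA (hB.wronskian hA) ?_,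
    extendsMeromorphically_of_eventually_eq_div hC hA ?_⟩
  · exact h.mono fun _ hw ↦ div_eq_of_eq_div_of_mul_eq_one hw.2.2.1 hw.1
  · exact h.mono fun _ hw ↦ div_eq_of_eq_div_of_mul_eq_one hw.2.1 hw.1
  · filter_upwards [h, hA0] with w hw hAw
    rw [hw.2.2.2, mul_div_cancel_left₀ _ hAw]

theorem coefficients_extend_meromorphically_general
    (ε : ℝ) (hε : 0 < ε) (α a δ : ℂ → ℂ)
    (hα : DifferentiableOn ℂ α {w : ℂ | 0 < ‖w‖ ∧ ‖w‖ < ε})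
    (ha : DifferentiableOn ℂ a {w : ℂ | 0 < ‖w‖ ∧ ‖w‖ < ε})
    (hW : ∃ w : ℂ, 0 < ‖w‖ ∧ ‖w‖ < ε ∧
      deriv α w * a w - deriv a w * α w ≠ 0)
    (hext : ∃ r ε' : ℝ, 0 < r ∧ 0 < ε' ∧ ∃ Pt Qt : ℂ × ℂ → ℂ,
      DifferentiableOn ℂ Pt {p : ℂ × ℂ | ‖p.1‖ < r ∧ ‖p.2‖ < ε'} ∧
      DifferentiableOn ℂ Qt {p : ℂ × ℂ | ‖p.1‖ < r ∧ ‖p.2‖ < ε'} ∧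
      ∀ z w : ℂ, ‖z‖ < r → 0 < ‖w‖ → ‖w‖ < ε' →
        Pt (z, w) = a w * (z + δ w) / (deriv α w * a w - deriv a w * α w) ∧
        Qt (z, w) = α w * (z + δ w) / (deriv α w * a w - deriv a w * α w)) :
    ExtendsMeromorphically α ∧ ExtendsMeromorphically a ∧ ExtendsMeromorphically δ := by
  obtain ⟨r, ε', hr, hε', Pt, Qt, hPt, hQt, heq⟩ := hext
  obtain ⟨w₀, hw₀, hw₀ε, hWw₀⟩ := hW
  set P : Set ℂ := {w : ℂ | 0 < ‖w‖ ∧ ‖w‖ < ε}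
  have hPS : ∀ w ∈ P ∩ ball 0 ε', 0 < ‖w‖ ∧ ‖w‖ < ε' :=
    fun w hw ↦ ⟨hw.1.1, mem_ball_zero_iff.mp hw.2⟩
  obtain ⟨A, C, hA, hC, hAC⟩ := exists_slope_intercept_of_eq_affine hr hPt
    (c := fun w ↦ a w / wronskian α a w) (d := fun w ↦ a w / wronskian α a w * δ w)
    fun z hz w hw ↦ by rw [(heq z w hz (hPS w hw).1 (hPS w hw).2).1, wronskian]; ring
  obtain ⟨B, _, hB, _, hBα⟩ := exists_slope_intercept_of_eq_affine hr hQt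
    (c := fun w ↦ α w / wronskian α a w) (d := fun w ↦ α w / wronskian α a w * δ w)
    fun z hz w hw ↦ by rw [(heq z w hz (hPS w hw).1 (hPS w hw).2).2, wronskian]; ring
  have hEW := wronskian_mul_wronskian_eq_one (isOpen_punctured_disc ε)
    (isPreconnected_punctured_disc ε) hα ha ⟨w₀, ⟨hw₀, hw₀ε⟩, hWw₀⟩ isOpen_ball hA hB
    (fun w hw ↦ (hAC w hw).1) (fun w hw ↦ (hBα w hw).1)
  have h0 : (0 : ℂ) ∈ ball 0 ε' := mem_ball_self hε'
  refine extendsMeromorphically_of_wronskian_mul_eq_one (W := wronskian α a) (hA.analyticOnNhd isOpen_ball 0 h0)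
    (hB.analyticOnNhd isOpen_ball 0 h0) (hC.analyticOnNhd isOpen_ball 0 h0) ?_
  filter_upwards [inter_mem (punctured_disc_mem_nhdsNE hε)
    (mem_nhdsWithin_of_mem_nhds (ball_mem_nhds 0 hε'))] with w hw
  exact ⟨hEW w hw, (hAC w hw).1, (hBα w hw).1, by rw [(hAC w hw).2, (hAC w hw).1]⟩

/-- **Holomorphic extendability of the pulled-back vector fields forces meromorphy of the
coefficients.** Let `α, a, δ` be holomorphic on the punctured disc `{0 < |w| < ε}` with
`W = α'a − a'α` not identically zero. If the functions `a(w)(z + δ(w))/W(w)` and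
`α(w)(z + δ(w))/W(w)` agree, for `|z| < r` and `0 < |w| < ε'`, with functions `P̃, Q̃`
holomorphic on the full polydisc `{|z| < r} × {|w| < ε'}`, then `α`, `a`, and `δ` all extend
meromorphically across `w = 0`. -/
theorem coefficients_extend_meromorphically
    (ε : ℝ) (hε : 0 < ε) (α a δ : ℂ → ℂ)
    (hα : DifferentiableOn ℂ α {w : ℂ | 0 < ‖w‖ ∧ ‖w‖ < ε})
    (ha : DifferentiableOn ℂ a {w : ℂ | 0 < ‖w‖ ∧ ‖w‖ < ε})
    (hδ : DifferentiableOn ℂ δ {w : ℂ | 0 < ‖w‖ ∧ ‖w‖ < ε})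
    (hW : ∃ w : ℂ, 0 < ‖w‖ ∧ ‖w‖ < ε ∧
      deriv α w * a w - deriv a w * α w ≠ 0)
    (hext : ∃ r ε' : ℝ, 0 < r ∧ 0 < ε' ∧ ∃ Pt Qt : ℂ × ℂ → ℂ,
      DifferentiableOn ℂ Pt {p : ℂ × ℂ | ‖p.1‖ < r ∧ ‖p.2‖ < ε'} ∧
      DifferentiableOn ℂ Qt {p : ℂ × ℂ | ‖p.1‖ < r ∧ ‖p.2‖ < ε'} ∧
      ∀ z w : ℂ, ‖z‖ < r → 0 < ‖w‖ → ‖w‖ < ε' →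
        Pt (z, w) = a w * (z + δ w) / (deriv α w * a w - deriv a w * α w) ∧
        Qt (z, w) = α w * (z + δ w) / (deriv α w * a w - deriv a w * α w)) :
    ExtendsMeromorphically α ∧ ExtendsMeromorphically a ∧ ExtendsMeromorphically δ :=
  coefficients_extend_meromorphically_general ε hε α a δ hα ha hW hext
end

section
/- Let 𝔩 be a complex Lie subalgebra of sl(3,ℂ) containing so(3,ℂ), the subalgebra of all antisymmetric (Aᵀ = −A) trace-zero 3×3 complex matrices. Then 𝔩 = so(3,ℂ) or 𝔩 = sl(3,ℂ). -/
/-!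
Under `ad`, `sl(3,ℂ) = so(3,ℂ) ⊕ sym0` with `sym0` the traceless symmetric matrices, and `L`,
being a subalgebra containing `so(3,ℂ)`, contains the symmetric part `X + Xᵀ` of each of its
elements. So if `L ≠ so(3,ℂ)` it contains a nonzero `S ∈ sym0`. Bracketing with the rotation
generators `rot i j` moves a nonzero entry of `S` to position `(2,2)`; then a polynomial in
`ad (rot 0 1)` projects `S` onto `diag(1,1,-2)`, whose iterated brackets with the `rot i j`
span `sym0`. Hence `L ⊇ so(3,ℂ) ⊕ sym0 = sl(3,ℂ)`.
-/

/-- `sl(3,ℂ)`, as the set of trace-zero `3×3` complex matrices. -/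
def sl3 : Set (Matrix (Fin 3) (Fin 3) ℂ) := {X | Matrix.trace X = 0}

/-- `so(3,ℂ)`, the set of antisymmetric trace-zero `3×3` complex matrices. -/
def so3 : Set (Matrix (Fin 3) (Fin 3) ℂ) := {A | A ∈ sl3 ∧ A.transpose = -A}

attribute [local instance 100] LieRing.ofAssociativeRing

namespace Matrix

variable {n R : Type*} [DecidableEq n] [CommRing R]

def rot (i j : n) : Matrix n n R := single i j 1 - single j i 1

lemma transpose_rot (i j : n) : (rot i j : Matrix n n R)ᵀ = -rot i j := by
  simp [rot, transpose_single]

variable [Fintype n]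

lemma trace_rot (i j : n) : (rot i j : Matrix n n R).trace = 0 := by
  rcases eq_or_ne i j with rfl | h
  · simp [rot]
  · simp [rot, trace_single_eq_of_ne _ _ _ h, trace_single_eq_of_ne _ _ _ h.symm]

lemma lie_rot_apply (i j : n) (S : Matrix n n R) (a b : n) :
    ⁅(rot i j : Matrix n n R), S⁆ a b =
      (if i = a then S j b else 0) - (if j = a then S i b else 0)
        - (if j = b then S a i else 0) + (if i = b then S a j else 0) := by
  simp [rot, Ring.lie_def, sub_mul, mul_sub, mul_apply, single_apply, ite_and]
  abel

lemma trace_lie (A B : Matrix n n R) : ⁅A, B⁆.trace = 0 := by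
  rw [Ring.lie_def, trace_sub, trace_mul_comm, sub_self]

lemma IsSymm.lie_of_transpose_eq_neg {A S : Matrix n n R} (hA : Aᵀ = -A) (hS : S.IsSymm) :
    ⁅A, S⁆.IsSymm := by
  simp only [IsSymm, Ring.lie_def, transpose_sub, transpose_mul, hA, hS.eq, mul_neg, neg_mul]
  abel

end Matrix

open Matrix

local notation "M₃" => Matrix (Fin 3) (Fin 3) ℂ
local notation "ρ" => (rot : Fin 3 → Fin 3 → M₃)

def sym0 : Set M₃ := {S | S.IsSymm ∧ S.trace = 0}

def diagD : M₃ := diagonal ![1, 1, -2]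

lemma rot_mem_so3 (i j : Fin 3) : rot i j ∈ so3 :=
  ⟨trace_rot i j, transpose_rot i j⟩

lemma lie_mem_sym0 {A S : M₃} (hA : A ∈ so3) (hS : S ∈ sym0) : ⁅A, S⁆ ∈ sym0 :=
  ⟨hS.1.lie_of_transpose_eq_neg hA.2, trace_lie A S⟩

lemma sub_transpose_mem_so3 (X : M₃) : X - Xᵀ ∈ so3 :=
  ⟨by rw [sl3, Set.mem_ofPred_eq, trace_sub, trace_transpose, sub_self],
    by rw [transpose_sub, transpose_transpose, neg_sub]⟩

lemma add_transpose_mem_sym0 {X : M₃} (hX : X ∈ sl3) : X + Xᵀ ∈ sym0 := by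
  refine ⟨isSymm_add_transpose_self X, ?_⟩
  rw [trace_add, trace_transpose, show X.trace = 0 from hX, add_zero]

lemma apply_eq_of_mem_sym0 {S : M₃} (hS : S ∈ sym0) :
    S 1 0 = S 0 1 ∧ S 2 0 = S 0 2 ∧ S 2 1 = S 1 2 ∧ S 2 2 = -S 0 0 - S 1 1 := by
  obtain ⟨hsymm, htr⟩ := hS
  refine ⟨hsymm.apply 0 1, hsymm.apply 0 2, hsymm.apply 1 2, ?_⟩
  rw [trace_fin_three] at htr
  linear_combination htr

/-- On `sym0`, `ad (ρ 0 1)` has eigenvalues `0, ±i, ±2i` with kernel spanned by `diagD`, so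
`(ad² + 1)(ad² + 4)` is a multiple of the projection onto `ℂ ∙ diagD`. -/
lemma projection_sym0_onto_diagD {S : M₃} (hS : S ∈ sym0) :
    ⁅ρ 0 1, ⁅ρ 0 1, ⁅ρ 0 1, ⁅ρ 0 1, S⁆⁆⁆⁆ + (5 : ℂ) • ⁅ρ 0 1, ⁅ρ 0 1, S⁆⁆
      + (4 : ℂ) • S = (-2 * S 2 2) • diagD := by
  obtain ⟨h10, h20, h21, h22⟩ := apply_eq_of_mem_sym0 hS
  ext a b
  fin_cases a <;> fin_cases b <;>
    simp [lie_rot_apply, diagD, h10, h20, h21, h22] <;> ring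

lemma eq_lie_combination_diagD {Y : M₃} (hY : Y ∈ sym0) :
    Y = (-Y 0 2 / 3) • ⁅ρ 0 2, diagD⁆ + (-Y 1 2 / 3) • ⁅ρ 1 2, diagD⁆
      + (-Y 0 1 / 3) • ⁅ρ 1 2, ⁅ρ 0 2, diagD⁆⁆
      + (-(Y 0 0 - Y 1 1) / 12) • ⁅ρ 0 1, ⁅ρ 1 2, ⁅ρ 0 2, diagD⁆⁆⁆
      + ((Y 0 0 + Y 1 1) / 2) • diagD := by
  obtain ⟨h10, h20, h21, h22⟩ := apply_eq_of_mem_sym0 hY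
  ext a b
  fin_cases a <;> fin_cases b <;>
    simp [lie_rot_apply, diagD, h10, h20, h21, h22] <;> ring

section

variable {L : LieSubalgebra ℂ M₃}

lemma exists_mem_sym0_ne_zero (hL : (L : Set M₃) ⊆ sl3) (hso : so3 ⊆ L)
    (h : ¬(L : Set M₃) ⊆ so3) : ∃ S ∈ L, S ∈ sym0 ∧ S ≠ 0 := by
  obtain ⟨X, hXL, hX⟩ := Set.not_subset.mp h
  refine ⟨X + Xᵀ, ?_, add_transpose_mem_sym0 (hL hXL), fun h0 => hX ⟨hL hXL, ?_⟩⟩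
  · have : X + Xᵀ = (2 : ℂ) • X - (X - Xᵀ) := by module
    rw [this]
    exact L.sub_mem (L.smul_mem 2 hXL) (hso (sub_transpose_mem_so3 X))
  · exact eq_neg_of_add_eq_zero_right h0

lemma lie_rot_mem (hso : so3 ⊆ L) (i j : Fin 3) {S : M₃} (hS : S ∈ L) : ⁅ρ i j, S⁆ ∈ L :=
  L.lie_mem (hso (rot_mem_so3 i j)) hS

lemma diagD_mem_of_apply_two_two_ne_zero (hso : so3 ⊆ L) {S : M₃} (hSL : S ∈ L)
    (hS : S ∈ sym0) (h22 : S 2 2 ≠ 0) : diagD ∈ L := by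
  have hc : -2 * S 2 2 ≠ 0 := mul_ne_zero (by norm_num) h22
  have hmem : (-2 * S 2 2) • diagD ∈ L := by
    rw [← projection_sym0_onto_diagD hS]
    have h2 := lie_rot_mem hso 0 1 (lie_rot_mem hso 0 1 hSL)
    exact L.add_mem (L.add_mem (lie_rot_mem hso 0 1 (lie_rot_mem hso 0 1 h2))
      (L.smul_mem _ h2)) (L.smul_mem _ hSL)
  simpa only [inv_smul_smul₀ hc] using L.smul_mem (-2 * S 2 2)⁻¹ hmem

lemma diagD_mem_of_apply_one_two_ne_zero (hso : so3 ⊆ L) {S : M₃} (hSL : S ∈ L)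
    (hS : S ∈ sym0) (h12 : S 1 2 ≠ 0) : diagD ∈ L := by
  refine diagD_mem_of_apply_two_two_ne_zero hso (lie_rot_mem hso 1 2 hSL)
    (lie_mem_sym0 (rot_mem_so3 1 2) hS) ?_
  have : ⁅ρ 1 2, S⁆ 2 2 = -2 * S 1 2 := by
    simp only [lie_rot_apply, Fin.reduceEq, ↓reduceIte, (apply_eq_of_mem_sym0 hS).2.2.1]
    ring
  rw [this]
  exact mul_ne_zero (by norm_num) h12

lemma diagD_mem_of_ne_zero (hso : so3 ⊆ L) {S : M₃} (hSL : S ∈ L) (hS : S ∈ sym0)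
    (hS0 : S ≠ 0) : diagD ∈ L := by
  obtain ⟨h10, h20, h21, h22⟩ := apply_eq_of_mem_sym0 hS
  by_cases h22' : S 2 2 ≠ 0
  · exact diagD_mem_of_apply_two_two_ne_zero hso hSL hS h22'
  by_cases h12 : S 1 2 ≠ 0
  · exact diagD_mem_of_apply_one_two_ne_zero hso hSL hS h12
  by_cases h02 : S 0 2 ≠ 0
  · refine diagD_mem_of_apply_two_two_ne_zero hso (lie_rot_mem hso 0 2 hSL)
      (lie_mem_sym0 (rot_mem_so3 0 2) hS) ?_
    have : ⁅ρ 0 2, S⁆ 2 2 = -2 * S 0 2 := by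
      simp only [lie_rot_apply, Fin.reduceEq, ↓reduceIte, h20]
      ring
    rw [this]
    exact mul_ne_zero (by norm_num) h02
  push Not at h22' h12 h02
  have h11 : S 1 1 = -S 0 0 := by linear_combination h22 - h22'
  by_cases h00 : S 0 0 ≠ 0
  · refine diagD_mem_of_apply_one_two_ne_zero hso (lie_rot_mem hso 1 2 hSL)
      (lie_mem_sym0 (rot_mem_so3 1 2) hS) ?_
    have : ⁅ρ 1 2, S⁆ 1 2 = S 0 0 := by simp [lie_rot_apply, h22', h11]
    rwa [this]
  push Not at h00
  refine diagD_mem_of_apply_one_two_ne_zero hso (lie_rot_mem hso 0 2 hSL)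
    (lie_mem_sym0 (rot_mem_so3 0 2) hS) ?_
  have : ⁅ρ 0 2, S⁆ 1 2 = -S 0 1 := by simp [lie_rot_apply, h10]
  rw [this, neg_ne_zero]
  contrapose! hS0
  ext a b
  fin_cases a <;> fin_cases b <;>
    simp [h00, h11, h02, h12, h22', h10, h20, h21, hS0]

lemma sym0_subset (hso : so3 ⊆ L) (hD : diagD ∈ L) : sym0 ⊆ L := by
  intro Y hY
  rw [SetLike.mem_coe, eq_lie_combination_diagD hY]
  have h02 := lie_rot_mem hso 0 2 hD
  refine L.add_mem (L.add_mem (L.add_mem (L.add_mem ?_ ?_) ?_) ?_) (L.smul_mem _ hD) <;>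
    refine L.smul_mem _ ?_
  · exact h02
  · exact lie_rot_mem hso 1 2 hD
  · exact lie_rot_mem hso 1 2 h02
  · exact lie_rot_mem hso 0 1 (lie_rot_mem hso 1 2 h02)

lemma sl3_subset (hso : so3 ⊆ L) (hsym : sym0 ⊆ L) : sl3 ⊆ L := by
  intro Y hY
  have : Y = (2⁻¹ : ℂ) • (Y - Yᵀ) + (2⁻¹ : ℂ) • (Y + Yᵀ) := by module
  rw [SetLike.mem_coe, this]
  exact L.add_mem (L.smul_mem _ (hso (sub_transpose_mem_so3 Y)))
    (L.smul_mem _ (hsym (add_transpose_mem_sym0 hY)))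

end

/-- **A Lie subalgebra of `sl(3,ℂ)` containing `so(3,ℂ)` is `so(3,ℂ)` or `sl(3,ℂ)`.** -/
theorem subalgebra_containing_so3
    (L : LieSubalgebra ℂ (Matrix (Fin 3) (Fin 3) ℂ))
    (hL : (L : Set (Matrix (Fin 3) (Fin 3) ℂ)) ⊆ sl3)
    (hso : so3 ⊆ (L : Set (Matrix (Fin 3) (Fin 3) ℂ))) :
    (L : Set (Matrix (Fin 3) (Fin 3) ℂ)) = so3 ∨
    (L : Set (Matrix (Fin 3) (Fin 3) ℂ)) = sl3 := by
  by_cases h : (L : Set M₃) ⊆ so3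
  · exact Or.inl (h.antisymm hso)
  obtain ⟨S, hSL, hS, hS0⟩ := exists_mem_sym0_ne_zero hL hso h
  have hD := diagD_mem_of_ne_zero hso hSL hS hS0
  exact Or.inr (hL.antisymm (sl3_subset hso (sym0_subset hso hD)))
end
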